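/- arXiv:math/0009174 — 8 statements merged into one kernel-verified Lean document; each statement's English description precedes it below -/
import Mathlib

section
/- For every positive integer n, all 1 ≤ i < j ≤ n, and every permutation w of {1,…,n}: ℓ(w·s_{ij}) = ℓ(w) − (2(j−i) − 1) if and only if for all k with i ≤ k ≤ j one has w(i) ≥ w(k) ≥ w(j). -/
/-- The length (number of inversions) of a permutation of `{1,…,n}`
(modeled as `Fin n`): the number of pairs `a < b` with `w a > w b`. -/
def invLen {n : ℕ} (w : Equiv.Perm (Fin n)) : ℕ :=
  (Finset.univ.filter fun p : Fin n × Fin n => p.1 < p.2 ∧ w p.2 < w p.1).card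

open Finset Equiv

/-- For `1 ≤ i < j ≤ n` and `w ∈ S_n`, we have `ℓ(w·s_{ij}) = ℓ(w) − (2(j−i) − 1)`
iff for all `i ≤ k ≤ j`, `w(i) ≥ w(k) ≥ w(j)`. -/
theorem length_mul_swap_eq_sub_iff
    (n : ℕ) (hn : 0 < n) (i j : Fin n) (hij : i < j) (w : Equiv.Perm (Fin n)) :
    (invLen (w * Equiv.swap i j) : ℤ)
        = (invLen w : ℤ) - (2 * ((j : ℤ) - (i : ℤ)) - 1) ↔
      ∀ k : Fin n, i ≤ k → k ≤ j → w j ≤ w k ∧ w k ≤ w i := by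
  classical
  set t := Equiv.swap i j with ht
  have tt : ∀ x, t (t x) = x := fun x => Equiv.swap_apply_self i j x
  have flip0 : ∀ a b : Fin n, a ≠ b → (¬ a < b ↔ b < a) := by
    intro a b hab
    rw [not_lt]
    exact ⟨fun h' => lt_of_le_of_ne h' hab.symm, le_of_lt⟩
  have flipt : ∀ a b : Fin n, a ≠ b → (¬ t a < t b ↔ t b < t a) :=
    fun a b hab => flip0 _ _ (fun h => hab (t.injective h))
  have flipw : ∀ a b : Fin n, a ≠ b → (¬ w a < w b ↔ w b < w a) :=
    fun a b hab => flip0 _ _ (fun h => hab (w.injective h))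
  -- Step 1: change of variables
  have h1 : invLen (w * t) =
      (univ.filter fun p : Fin n × Fin n => t p.1 < t p.2 ∧ w p.2 < w p.1).card := by
    unfold invLen
    apply Finset.card_bij' (fun p _ => (t p.1, t p.2)) (fun p _ => (t p.1, t p.2)) <;>
      simp only [Finset.mem_filter, Finset.mem_univ, true_and] <;> simp [Equiv.Perm.mul_apply, tt]
  -- Step 2: split invLen w
  have h2 : invLen w
      = (univ.filter fun p : Fin n × Fin n => (p.1 < p.2 ∧ w p.2 < w p.1) ∧ t p.1 < t p.2).card
      + (univ.filter fun p : Fin n × Fin n => (p.1 < p.2 ∧ t p.2 < t p.1) ∧ w p.2 < w p.1).card := by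
    unfold invLen
    rw [← Finset.card_filter_add_card_filter_not
      (p := fun p : Fin n × Fin n => t p.1 < t p.2)]
    congr 1
    · rw [Finset.filter_filter]
    · rw [Finset.filter_filter]
      refine congrArg Finset.card (Finset.filter_congr fun p _ => ?_)
      constructor
      · rintro ⟨⟨ha, hb⟩, hc⟩
        exact ⟨⟨ha, (flipt _ _ (ne_of_lt ha)).mp hc⟩, hb⟩
      · rintro ⟨⟨ha, hb⟩, hc⟩
        exact ⟨⟨ha, hc⟩, (flipt _ _ (ne_of_lt ha)).mpr hb⟩
  -- Step 3: split the measured set for w*t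
  have h3 : (univ.filter fun p : Fin n × Fin n => t p.1 < t p.2 ∧ w p.2 < w p.1).card
      = (univ.filter fun p : Fin n × Fin n => (p.1 < p.2 ∧ w p.2 < w p.1) ∧ t p.1 < t p.2).card
      + (univ.filter fun p : Fin n × Fin n => (p.2 < p.1 ∧ t p.1 < t p.2) ∧ w p.2 < w p.1).card := by
    rw [← Finset.card_filter_add_card_filter_not
      (p := fun p : Fin n × Fin n => p.1 < p.2)]
    congr 1
    · rw [Finset.filter_filter]
      refine congrArg Finset.card (Finset.filter_congr fun p _ => ?_)
      tauto
    · rw [Finset.filter_filter]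
      refine congrArg Finset.card (Finset.filter_congr fun p _ => ?_)
      constructor
      · rintro ⟨⟨ha, hb⟩, hc⟩
        have hne : t p.1 ≠ t p.2 := ne_of_lt ha
        have hne2 : p.1 ≠ p.2 := fun h => hne (by rw [h])
        exact ⟨⟨(flip0 _ _ hne2).mp hc, ha⟩, hb⟩
      · rintro ⟨⟨ha, hb⟩, hc⟩
        exact ⟨⟨hb, hc⟩, not_lt.mpr (le_of_lt ha)⟩
  -- Step 4: swap coordinates
  have h4 : (univ.filter fun p : Fin n × Fin n => (p.2 < p.1 ∧ t p.1 < t p.2) ∧ w p.2 < w p.1).card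
      = (univ.filter fun p : Fin n × Fin n => (p.1 < p.2 ∧ t p.2 < t p.1) ∧ w p.1 < w p.2).card := by
    apply Finset.card_bij' (fun p _ => (p.2, p.1)) (fun p _ => (p.2, p.1)) <;> simp <;> tauto
  -- membership characterization of A
  have memA : ∀ p : Fin n × Fin n, (p.1 < p.2 ∧ t p.2 < t p.1) ↔
      ((p.1 = i ∧ i < p.2 ∧ p.2 ≤ j) ∨ (p.2 = j ∧ i < p.1 ∧ p.1 < j)) := by
    intro p
    obtain ⟨a, b⟩ := p
    have hij' : (i : ℕ) < (j : ℕ) := hij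
    simp only [ht, Equiv.swap_apply_def]
    split_ifs <;>
      simp only [Fin.lt_def, Fin.le_def, Fin.ext_iff, Prod.fst, Prod.snd] at * <;> omega
  -- Step 5: cardinality of A
  have h5 : (univ.filter fun p : Fin n × Fin n => p.1 < p.2 ∧ t p.2 < t p.1).card
      = 2 * ((j : ℕ) - (i : ℕ)) - 1 := by
    have hA : (univ.filter fun p : Fin n × Fin n => p.1 < p.2 ∧ t p.2 < t p.1)
        = ((Finset.Ioc i j).image fun k => ((i, k) : Fin n × Fin n))
          ∪ ((Finset.Ioo i j).image fun k => ((k, j) : Fin n × Fin n)) := by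
      ext p
      simp only [Finset.mem_filter, Finset.mem_univ, true_and, Finset.mem_union,
        Finset.mem_image, Finset.mem_Ioc, Finset.mem_Ioo, memA p]
      constructor
      · rintro (⟨ha, hb, hc⟩ | ⟨ha, hb, hc⟩)
        · exact Or.inl ⟨p.2, ⟨hb, hc⟩, by rw [← ha]⟩
        · exact Or.inr ⟨p.1, ⟨hb, hc⟩, by rw [← ha]⟩
      · rintro (⟨k, ⟨hk1, hk2⟩, rfl⟩ | ⟨k, ⟨hk1, hk2⟩, rfl⟩)
        · exact Or.inl ⟨rfl, hk1, hk2⟩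
        · exact Or.inr ⟨rfl, hk1, hk2⟩
    have hdisj : Disjoint ((Finset.Ioc i j).image fun k => ((i, k) : Fin n × Fin n))
        ((Finset.Ioo i j).image fun k => ((k, j) : Fin n × Fin n)) := by
      rw [Finset.disjoint_left]
      rintro p hp hq
      simp only [Finset.mem_image, Finset.mem_Ioc, Finset.mem_Ioo] at hp hq
      obtain ⟨k, ⟨hk1, _⟩, rfl⟩ := hp
      obtain ⟨k', ⟨hk1', _⟩, he⟩ := hq
      rw [Prod.mk.injEq] at he
      rw [he.1] at hk1'
      exact lt_irrefl i hk1'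
    have hinj1 : Function.Injective fun k : Fin n => ((i, k) : Fin n × Fin n) := by
      intro a b hab
      simpa using hab
    have hinj2 : Function.Injective fun k : Fin n => ((k, j) : Fin n × Fin n) := by
      intro a b hab
      simpa using hab
    rw [hA, Finset.card_union_of_disjoint hdisj, Finset.card_image_of_injective _ hinj1,
      Finset.card_image_of_injective _ hinj2, Fin.card_Ioc, Fin.card_Ioo]
    have : (i : ℕ) < (j : ℕ) := hij
    omega
  -- Step 6: A splits into inversions and non-inversions
  have h6 : (univ.filter fun p : Fin n × Fin n => p.1 < p.2 ∧ t p.2 < t p.1).card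
      = (univ.filter fun p : Fin n × Fin n => (p.1 < p.2 ∧ t p.2 < t p.1) ∧ w p.2 < w p.1).card
      + (univ.filter fun p : Fin n × Fin n => (p.1 < p.2 ∧ t p.2 < t p.1) ∧ w p.1 < w p.2).card := by
    rw [← Finset.card_filter_add_card_filter_not
      (p := fun p : Fin n × Fin n => w p.2 < w p.1)]
    congr 1
    · rw [Finset.filter_filter]
    · rw [Finset.filter_filter]
      refine congrArg Finset.card (Finset.filter_congr fun p _ => ?_)
      constructor
      · rintro ⟨⟨ha, hb⟩, hc⟩
        exact ⟨⟨ha, hb⟩, (flipw _ _ (ne_of_lt ha).symm).mp hc⟩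
      · rintro ⟨⟨ha, hb⟩, hc⟩
        exact ⟨⟨ha, hb⟩, (flipw _ _ (ne_of_lt ha).symm).mpr hc⟩
  -- reduce the equation to emptiness of the non-inversion part of A
  have key : ((invLen (w * t) : ℤ) = (invLen w : ℤ) - (2 * ((j : ℤ) - (i : ℤ)) - 1))
      ↔ (univ.filter fun p : Fin n × Fin n =>
          (p.1 < p.2 ∧ t p.2 < t p.1) ∧ w p.1 < w p.2).card = 0 := by
    rw [h1, h3, h2, h4]
    have hij' : (i : ℕ) < (j : ℕ) := hij
    have hj : ((j : ℤ)) = ((j : ℕ) : ℤ) := rfl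
    have hi : ((i : ℤ)) = ((i : ℕ) : ℤ) := rfl
    rw [hj, hi]
    push_cast
    omega
  rw [key, Finset.card_eq_zero, Finset.filter_eq_empty_iff]
  constructor
  · -- no non-inversion in A implies condition on k's
    intro H k hik hkj
    constructor
    · -- w j ≤ w k
      rcases eq_or_lt_of_le hkj with h | hkj'
      · exact le_of_eq (congrArg w h.symm)
      · have hpA : ((k, j) : Fin n × Fin n).1 < (k, j).2 ∧ t (k, j).2 < t (k, j).1 := by
          rcases eq_or_lt_of_le hik with h' | hik'
          · exact (memA (k, j)).mpr (Or.inl ⟨h'.symm, hij, le_refl j⟩)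
          · exact (memA (k, j)).mpr (Or.inr ⟨rfl, hik', hkj'⟩)
        have hnot := H (Finset.mem_univ ((k, j) : Fin n × Fin n))
        rw [not_and] at hnot
        exact not_lt.mp (hnot hpA)
    · -- w k ≤ w i
      rcases eq_or_lt_of_le hik with h | hik'
      · exact le_of_eq (congrArg w h.symm)
      · have hpA : ((i, k) : Fin n × Fin n).1 < (i, k).2 ∧ t (i, k).2 < t (i, k).1 :=
          (memA (i, k)).mpr (Or.inl ⟨rfl, hik', hkj⟩)
        have hnot := H (Finset.mem_univ ((i, k) : Fin n × Fin n))
        rw [not_and] at hnot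
        exact not_lt.mp (hnot hpA)
  · -- condition on k's implies no non-inversion in A
    intro H p _
    rintro ⟨hpA, hww⟩
    rcases (memA p).mp hpA with ⟨ha, hb, hc⟩ | ⟨ha, hb, hc⟩
    · have := (H p.2 (le_of_lt hb) hc).2
      rw [ha] at hww
      exact absurd this (not_le.mpr hww)
    · have := (H p.1 (le_of_lt hb) (le_of_lt hc)).1
      rw [ha] at hww
      exact absurd this (not_le.mpr hww)
end

section
/- Let n be a positive integer and let o ∈ S_n be the n-cycle with o(i) = i+1 for 1 ≤ i ≤ n−1 and o(n) = 1. Fix 1 ≤ i < j ≤ n and i ≤ k ≤ j. Then a permutation w ∈ S_n satisfies [w(k) ≥ w(j) ≥ w(i) or w(j) ≥ w(i) ≥ w(k) or w(i) ≥ w(k) ≥ w(j)] if and only if the permutation o∘w (composition acting as o after w) satisfies the same condition; i.e., the set of w satisfying this trichotomy is invariant under left multiplication by o. -/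
/-!
The three-way disjunction is Mathlib's circular betweenness `btw (w i) (w j) (w k)` on `Fin n`
(the order `≤` looped around), and `o` is `finRotate n`, which preserves the circular order:
shifting by one is monotone except that the largest element wraps around to `0`, which only
rotates the three cases into one another.
-/

theorem Fin.btw_finRotate_iff {n : ℕ} {a b c : Fin n} :
    btw (finRotate n a) (finRotate n b) (finRotate n c) ↔ btw a b c := by
  cases n with
  | zero => exact a.elim0
  | succ n =>
    simp only [Fin.btw_iff, Fin.le_def, coe_finRotate, Fin.ext_iff, Fin.val_last]
    split_ifs <;> omega

theorem eq_finRotate_of_val_apply {n : ℕ} {o : Equiv.Perm (Fin n)}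
    (ho : ∀ a : Fin n, (o a : ℕ) = ((a : ℕ) + 1) % n) : o = finRotate n := by
  ext a
  have := a.neZero
  rw [ho, finRotate_apply, Fin.val_add, Fin.val_one', Nat.add_mod_mod]

theorem trichotomy_invariant_under_cycle_general
    (n : ℕ) (o : Equiv.Perm (Fin n))
    (ho : ∀ a : Fin n, (o a : ℕ) = ((a : ℕ) + 1) % n)
    (i j k : Fin n)
    (w : Equiv.Perm (Fin n)) :
    ((w j ≤ w k ∧ w i ≤ w j) ∨ (w i ≤ w j ∧ w k ≤ w i) ∨
        (w k ≤ w i ∧ w j ≤ w k)) ↔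
      (((o * w) j ≤ (o * w) k ∧ (o * w) i ≤ (o * w) j) ∨
        ((o * w) i ≤ (o * w) j ∧ (o * w) k ≤ (o * w) i) ∨
        ((o * w) k ≤ (o * w) i ∧ (o * w) j ≤ (o * w) k)) := by
  obtain rfl := eq_finRotate_of_val_apply ho
  have iff_btw (a b c : Fin n) :
      ((b ≤ c ∧ a ≤ b) ∨ (a ≤ b ∧ c ≤ a) ∨ (c ≤ a ∧ b ≤ c)) ↔ btw a b c := by
    rw [Fin.btw_iff]
    tauto
  simp only [iff_btw, Equiv.Perm.mul_apply, Fin.btw_finRotate_iff]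

/-- Let `o ∈ S_n` be the `n`-cycle `o(i) = i + 1 (mod n)` (i.e. `o(i) = i+1` for
`1 ≤ i ≤ n−1` and `o(n) = 1` in 1-based terms).  Fix `i < j` and `i ≤ k ≤ j`.
A permutation `w` satisfies
`w(k) ≥ w(j) ≥ w(i) ∨ w(j) ≥ w(i) ≥ w(k) ∨ w(i) ≥ w(k) ≥ w(j)`
iff `o∘w` satisfies the same condition. -/
theorem trichotomy_invariant_under_cycle
    (n : ℕ) (hn : 0 < n) (o : Equiv.Perm (Fin n))
    (ho : ∀ a : Fin n, (o a : ℕ) = ((a : ℕ) + 1) % n)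
    (i j k : Fin n) (hij : i < j) (hik : i ≤ k) (hkj : k ≤ j)
    (w : Equiv.Perm (Fin n)) :
    ((w j ≤ w k ∧ w i ≤ w j) ∨ (w i ≤ w j ∧ w k ≤ w i) ∨
        (w k ≤ w i ∧ w j ≤ w k)) ↔
      (((o * w) j ≤ (o * w) k ∧ (o * w) i ≤ (o * w) j) ∨
        ((o * w) i ≤ (o * w) j ∧ (o * w) k ≤ (o * w) i) ∨
        ((o * w) k ≤ (o * w) i ∧ (o * w) j ≤ (o * w) k)) :=
  trichotomy_invariant_under_cycle_general n o ho i j k w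
end

section
/- Let n be a positive integer, 1 ≤ i < j ≤ n, and let o ∈ S_n be the n-cycle with o(i) = i+1 for 1 ≤ i ≤ n−1 and o(n) = 1. For every w ∈ S_n, the condition [ℓ(w·s_{ij}) = ℓ(w) + 1 or ℓ(w·s_{ij}) = ℓ(w) − 2(j−i) + 1] holds if and only if the same condition holds with w replaced by o∘w, i.e., [ℓ((o∘w)·s_{ij}) = ℓ(o∘w) + 1 or ℓ((o∘w)·s_{ij}) = ℓ(o∘w) − 2(j−i) + 1]. -/
open Finset in
lemma invLen_cast_eq_sum {n : ℕ} (u : Equiv.Perm (Fin n)) :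
    (invLen u : ℤ) = ∑ p : Fin n × Fin n, (if p.1 < p.2 ∧ u p.2 < u p.1 then (1:ℤ) else 0) := by
  unfold invLen
  rw [Finset.natCast_card_filter]

open Finset in
lemma swap_lt_iff_of_out {n : ℕ} (i j a b : Fin n) (hij : i < j)
    (h : a ∉ Finset.Icc i j ∨ b ∉ Finset.Icc i j) :
    (Equiv.swap i j a < Equiv.swap i j b ↔ a < b) := by
  simp only [Finset.mem_Icc, not_and_or, not_le] at h
  simp only [Equiv.swap_apply_def]
  split_ifs with h1 h2 h3 h4 h5 h6 <;>
    simp_all only [Fin.lt_def, Fin.ext_iff, Fin.le_def] <;> omega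

set_option maxHeartbeats 1600000 in
open Finset in
lemma key_formula {n : ℕ} (i j : Fin n) (hij : i < j) (w : Equiv.Perm (Fin n))
    (h : w i < w j) :
    (invLen (w * Equiv.swap i j) : ℤ) = (invLen w : ℤ)
      + 2 * (((Finset.Ioo i j).filter fun k => w i < w k ∧ w k < w j).card : ℤ) + 1 := by
  have hne : i ≠ j := ne_of_lt hij
  set s := Equiv.swap i j with hs
  have hrw : (invLen (w * s) : ℤ)
      = ∑ p : Fin n × Fin n, (if s p.1 < s p.2 ∧ w p.2 < w p.1 then (1:ℤ) else 0) := by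
    rw [invLen_cast_eq_sum]
    refine (Fintype.sum_equiv (Equiv.prodCongr s s) _ _ fun p => ?_).symm
    simp [Equiv.Perm.mul_apply, hs, Equiv.swap_apply_self]
  set g : Fin n × Fin n → ℤ := fun p =>
    (if s p.1 < s p.2 ∧ w p.2 < w p.1 then (1:ℤ) else 0)
      - (if p.1 < p.2 ∧ w p.2 < w p.1 then (1:ℤ) else 0) with hg
  suffices hsub : (∑ p : Fin n × Fin n, g p)
      = 2 * (((Finset.Ioo i j).filter fun k => w i < w k ∧ w k < w j).card : ℤ) + 1 by
    have hdist : (∑ p : Fin n × Fin n, g p)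
        = (∑ p : Fin n × Fin n, (if s p.1 < s p.2 ∧ w p.2 < w p.1 then (1:ℤ) else 0))
          - (∑ p : Fin n × Fin n, (if p.1 < p.2 ∧ w p.2 < w p.1 then (1:ℤ) else 0)) := by
      rw [← Finset.sum_sub_distrib]
    rw [hdist] at hsub
    rw [hrw, invLen_cast_eq_sum]
    linarith
  have hvanish : ∀ p ∈ (univ : Finset (Fin n × Fin n)),
      p ∉ (Icc i j ×ˢ Icc i j) → g p = 0 := by
    intro p _ hp
    rw [Finset.mem_product, not_and_or] at hp
    have hiff : s p.1 < s p.2 ↔ p.1 < p.2 := swap_lt_iff_of_out i j p.1 p.2 hij hp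
    simp only [hg]
    simp only [hiff]
    exact sub_self _
  rw [← Finset.sum_subset (Finset.subset_univ (Icc i j ×ˢ Icc i j)) hvanish]
  rw [Finset.sum_product]
  have hIcc : Finset.Icc i j = insert i (insert j (Finset.Ioo i j)) := by
    ext x
    simp only [Finset.mem_Icc, Finset.mem_insert, Finset.mem_Ioo, Fin.le_def, Fin.lt_def,
      Fin.ext_iff]
    have := hij
    rw [Fin.lt_def] at this
    omega
  have hinotin : i ∉ insert j (Finset.Ioo i j) := by
    simp only [Finset.mem_insert, Finset.mem_Ioo]
    push_neg
    exact ⟨hne, fun h' => absurd h' (lt_irrefl i)⟩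
  have hjnotin : j ∉ Finset.Ioo i j := by
    simp only [Finset.mem_Ioo]
    exact fun h' => absurd h'.2 (lt_irrefl j)
  simp only [hIcc, Finset.sum_insert hinotin, Finset.sum_insert hjnotin]
  have hsi : s i = j := Equiv.swap_apply_left i j
  have hsj : s j = i := Equiv.swap_apply_right i j
  have e_ii : g (i, i) = 0 := by simp [hg]
  have e_ij : g (i, j) = 0 := by
    simp only [hg, hsi, hsj]
    have h1 : ¬ w j < w i := not_lt_of_gt h
    simp [h1]
  have e_ji : g (j, i) = 1 := by
    simp only [hg, hsi, hsj]
    have h1 : ¬ j < i := not_lt_of_gt hij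
    simp [h1, hij, h]
  have e_jj : g (j, j) = 0 := by simp [hg]
  have hmerge : (∑ k ∈ Finset.Ioo i j, g (i, k))
      + ((∑ k ∈ Finset.Ioo i j, g (j, k))
        + (∑ k ∈ Finset.Ioo i j, (g (k, i) + (g (k, j) + ∑ k' ∈ Finset.Ioo i j, g (k, k')))))
      = 2 * (((Finset.Ioo i j).filter fun k => w i < w k ∧ w k < w j).card : ℤ) := by
    rw [Finset.natCast_card_filter, Finset.mul_sum, ← Finset.sum_add_distrib,
      ← Finset.sum_add_distrib]
    refine Finset.sum_congr rfl fun k hk => ?_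
    rw [Finset.mem_Ioo] at hk
    have hki : k ≠ i := ne_of_gt hk.1
    have hkj' : k ≠ j := ne_of_lt hk.2
    have hsk : s k = k := Equiv.swap_apply_of_ne_of_ne hki hkj'
    have hzero : (∑ k' ∈ Finset.Ioo i j, g (k, k')) = 0 := by
      refine Finset.sum_eq_zero fun k' hk' => ?_
      rw [Finset.mem_Ioo] at hk'
      have hsk' : s k' = k' :=
        Equiv.swap_apply_of_ne_of_ne (ne_of_gt hk'.1) (ne_of_lt hk'.2)
      simp [hg, hsk, hsk']
    rw [hzero]
    have wki : (w k).val ≠ (w i).val := fun hh => hki (w.injective (Fin.ext hh))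
    have wkj : (w k).val ≠ (w j).val := fun hh => hkj' (w.injective (Fin.ext hh))
    have h1 : ¬ (j < k) := not_lt_of_gt hk.2
    have h2 : ¬ (k < i) := not_lt_of_gt hk.1
    have h3 : i < k := hk.1
    have h4 : k < j := hk.2
    simp only [hg, hsk, hsi, hsj]
    simp only [h1, h2, h3, h4, false_and, true_and, if_false, if_true, ite_false, ite_true]
    have h' : (w i).val < (w j).val := h
    simp only [Fin.lt_def]
    split_ifs <;> omega
  rw [e_ii, e_ij, e_ji, e_jj]
  rw [show (0 : ℤ) + (0 + ∑ k ∈ Finset.Ioo i j, g (i, k))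
        + ((1 + (0 + ∑ k ∈ Finset.Ioo i j, g (j, k)))
          + ∑ k ∈ Finset.Ioo i j, (g (k, i) + (g (k, j) + ∑ k' ∈ Finset.Ioo i j, g (k, k'))))
      = (∑ k ∈ Finset.Ioo i j, g (i, k))
        + ((∑ k ∈ Finset.Ioo i j, g (j, k))
          + (∑ k ∈ Finset.Ioo i j, (g (k, i) + (g (k, j) + ∑ k' ∈ Finset.Ioo i j, g (k, k')))))
        + 1 from by ring]
  rw [hmerge]

open Finset in
lemma key_formula' {n : ℕ} (i j : Fin n) (hij : i < j) (w : Equiv.Perm (Fin n))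
    (h : w j < w i) :
    (invLen (w * Equiv.swap i j) : ℤ) = (invLen w : ℤ)
      - 2 * (((Finset.Ioo i j).filter fun k => w j < w k ∧ w k < w i).card : ℤ) - 1 := by
  set s := Equiv.swap i j with hs
  set w' := w * s with hw'
  have h1 : w' i = w j := by
    simp [hw', hs, Equiv.Perm.mul_apply, Equiv.swap_apply_left]
  have h2 : w' j = w i := by
    simp [hw', hs, Equiv.Perm.mul_apply, Equiv.swap_apply_right]
  have h' : w' i < w' j := by rw [h1, h2]; exact h
  have hk := key_formula i j hij w' h'
  have hws : w' * s = w := by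
    rw [hw', mul_assoc, hs, Equiv.swap_mul_self, mul_one]
  rw [hws] at hk
  have hfilter : ((Finset.Ioo i j).filter fun k => w' i < w' k ∧ w' k < w' j)
      = ((Finset.Ioo i j).filter fun k => w j < w k ∧ w k < w i) := by
    refine Finset.filter_congr fun k hk' => ?_
    rw [Finset.mem_Ioo] at hk'
    have hsk : s k = k := Equiv.swap_apply_of_ne_of_ne (ne_of_gt hk'.1) (ne_of_lt hk'.2)
    rw [h1, h2, show w' k = w k from by simp [hw', Equiv.Perm.mul_apply, hsk]]
  rw [hfilter] at hk
  linarith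

open Finset in
lemma shift_formula {n : ℕ} (hn : 0 < n) (o : Equiv.Perm (Fin n))
    (ho : ∀ a : Fin n, (o a : ℕ) = ((a : ℕ) + 1) % n) (last : Fin n)
    (hl : (last : ℕ) = n - 1) (u : Equiv.Perm (Fin n)) :
    (invLen (o * u) : ℤ) = (invLen u : ℤ)
      + 2 * ((u⁻¹ last : Fin n).val : ℤ) - ((n : ℤ) - 1) := by
  set q := u⁻¹ last with hq
  have huq : u q = last := Equiv.apply_symm_apply u last
  have ho_last : (o last).val = 0 := by
    rw [ho last, hl, Nat.sub_add_cancel hn, Nat.mod_self]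
  have ho_ne : ∀ a : Fin n, a ≠ last → (o a).val = a.val + 1 := by
    intro a ha
    have h1 : a.val ≠ n - 1 := fun hh => ha (Fin.ext (hh.trans hl.symm))
    have h2 : a.val < n := a.isLt
    rw [ho a]
    exact Nat.mod_eq_of_lt (by omega)
  have hpoint : ∀ p : Fin n × Fin n,
      ((if p.1 < p.2 ∧ u p.2 = last then (1:ℤ) else 0)
        - (if p.1 < p.2 ∧ u p.1 = last then (1:ℤ) else 0))
      = ((if p.1 < p.2 ∧ o (u p.2) < o (u p.1) then (1:ℤ) else 0)
        - (if p.1 < p.2 ∧ u p.2 < u p.1 then (1:ℤ) else 0)) := by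
    intro p
    by_cases hpp : p.1 < p.2
    · by_cases h1 : u p.1 = last
      · have h2 : u p.2 ≠ last := by
          intro hh
          have : p.1 = p.2 := u.injective (h1.trans hh.symm)
          exact absurd (this ▸ hpp) (lt_irrefl _)
        have hv2 : (u p.2).val < n - 1 := by
          have h3 := (u p.2).isLt
          have : (u p.2).val ≠ n - 1 := fun hh => h2 (Fin.ext (hh.trans hl.symm))
          omega
        have c1 : ¬ o (u p.2) < o (u p.1) := by
          rw [Fin.lt_def, h1, ho_last, ho_ne _ h2]
          omega
        have c2 : u p.2 < u p.1 := by
          rw [Fin.lt_def, h1, hl]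
          exact hv2
        rw [h1] at c1 c2
        simp [hpp, h1, h2, c1, c2]
      · by_cases h2 : u p.2 = last
        · have hv1 : (u p.1).val < n - 1 := by
            have h3 := (u p.1).isLt
            have : (u p.1).val ≠ n - 1 := fun hh => h1 (Fin.ext (hh.trans hl.symm))
            omega
          have c1 : o (u p.2) < o (u p.1) := by
            rw [Fin.lt_def, h2, ho_last, ho_ne _ h1]
            omega
          have c2 : ¬ u p.2 < u p.1 := by
            rw [Fin.lt_def, h2, hl]
            have := (u p.1).isLt
            omega
          rw [h2] at c1 c2
          simp [hpp, h1, h2, c1, c2]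
        · have c : o (u p.2) < o (u p.1) ↔ u p.2 < u p.1 := by
            rw [Fin.lt_def, Fin.lt_def, ho_ne _ h1, ho_ne _ h2]
            omega
          simp [hpp, h1, h2, c]
    · simp [hpp]
  have key : ∀ x : Fin n, u x = last ↔ x = q :=
    fun x => ⟨fun h => by rw [hq, ← h, Equiv.Perm.inv_def, Equiv.symm_apply_apply],
      fun h => by rw [h, huq]⟩
  have c1 : ((univ : Finset (Fin n × Fin n)).filter
      fun p => p.1 < p.2 ∧ u p.2 = last).card = q.val := by
    have hset : ((univ : Finset (Fin n × Fin n)).filter fun p => p.1 < p.2 ∧ u p.2 = last)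
        = Finset.Iio q ×ˢ {q} := by
      ext p
      simp only [Finset.mem_filter, Finset.mem_univ, true_and, Finset.mem_product,
        Finset.mem_Iio, Finset.mem_singleton, key p.2]
      constructor
      · rintro ⟨h1, h2⟩; exact ⟨h2 ▸ h1, h2⟩
      · rintro ⟨h1, h2⟩; exact ⟨h2.symm ▸ h1, h2⟩
    rw [hset, Finset.card_product, Fin.card_Iio]
    simp
  have c2 : ((univ : Finset (Fin n × Fin n)).filter
      fun p => p.1 < p.2 ∧ u p.1 = last).card = n - 1 - q.val := by
    have hset : ((univ : Finset (Fin n × Fin n)).filter fun p => p.1 < p.2 ∧ u p.1 = last)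
        = {q} ×ˢ Finset.Ioi q := by
      ext p
      simp only [Finset.mem_filter, Finset.mem_univ, true_and, Finset.mem_product,
        Finset.mem_Ioi, Finset.mem_singleton, key p.1]
      constructor
      · rintro ⟨h1, h2⟩; exact ⟨h2, h2 ▸ h1⟩
      · rintro ⟨h1, h2⟩; exact ⟨h1.symm ▸ h2, h1⟩
    rw [hset, Finset.card_product, Fin.card_Ioi]
    simp
  have hdiff : (invLen (o * u) : ℤ) - (invLen u : ℤ)
      = ((q.val : ℤ)) - ((n - 1 - q.val : ℕ) : ℤ) := by
    rw [invLen_cast_eq_sum, invLen_cast_eq_sum, ← Finset.sum_sub_distrib]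
    have : ∀ p : Fin n × Fin n,
        ((if p.1 < p.2 ∧ (o * u) p.2 < (o * u) p.1 then (1:ℤ) else 0)
          - (if p.1 < p.2 ∧ u p.2 < u p.1 then (1:ℤ) else 0))
        = ((if p.1 < p.2 ∧ u p.2 = last then (1:ℤ) else 0)
          - (if p.1 < p.2 ∧ u p.1 = last then (1:ℤ) else 0)) := by
      intro p
      simp only [Equiv.Perm.mul_apply]
      exact (hpoint p).symm
    rw [Finset.sum_congr rfl fun p _ => this p, Finset.sum_sub_distrib,
      ← Finset.natCast_card_filter, ← Finset.natCast_card_filter, c1, c2]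
  have hqlt : q.val < n := q.isLt
  omega

/-- Let `o` be the cyclic shift `o(i) = i + 1 (mod n)`.  For `1 ≤ i < j ≤ n` and
`w ∈ S_n`, the condition
`ℓ(w·s_{ij}) = ℓ(w) + 1 ∨ ℓ(w·s_{ij}) = ℓ(w) − 2(j−i) + 1`
holds iff the same condition holds for `o∘w` in place of `w`. -/
theorem length_condition_invariant_under_cycle
    (n : ℕ) (hn : 0 < n) (o : Equiv.Perm (Fin n))
    (ho : ∀ a : Fin n, (o a : ℕ) = ((a : ℕ) + 1) % n)
    (i j : Fin n) (hij : i < j) (w : Equiv.Perm (Fin n)) :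
    ((invLen (w * Equiv.swap i j) : ℤ) = (invLen w : ℤ) + 1 ∨
        (invLen (w * Equiv.swap i j) : ℤ)
          = (invLen w : ℤ) - 2 * ((j : ℤ) - (i : ℤ)) + 1) ↔
      ((invLen ((o * w) * Equiv.swap i j) : ℤ) = (invLen (o * w) : ℤ) + 1 ∨
        (invLen ((o * w) * Equiv.swap i j) : ℤ)
          = (invLen (o * w) : ℤ) - 2 * ((j : ℤ) - (i : ℤ)) + 1) := by
  
  have hij' : (i : ℕ) < (j : ℕ) := hij
  have hne : i ≠ j := ne_of_lt hij
  set s := Equiv.swap i j with hs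
  set last : Fin n := ⟨n - 1, by omega⟩ with hlast
  have hl : (last : ℕ) = n - 1 := rfl
  set q := w⁻¹ last with hq
  have hwq : w q = last := Equiv.apply_symm_apply w last
  have F3 := shift_formula hn o ho last hl w
  have F4 := shift_formula hn o ho last hl (w * s)
  have hinv : (w * s)⁻¹ last = s q := by
    rw [mul_inv_rev, Equiv.Perm.mul_apply, hs, Equiv.swap_inv]
  rw [hinv] at F4
  rw [mul_assoc]
  have hciz : ((i : ℤ)) = ((i : ℕ) : ℤ) := rfl
  have hcjz : ((j : ℤ)) = ((j : ℕ) : ℤ) := rfl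
  rw [hciz, hcjz]
  have hcard : ((Finset.Ioo i j).card) = (j : ℕ) - (i : ℕ) - 1 := by
    rw [Fin.card_Ioo]
  by_cases hqi : q = i
  · have hwi : w i = last := hqi ▸ hwq
    have hwj : (w j : ℕ) < n - 1 := by
      have h1 : w j ≠ last := by
        intro hh
        exact hne (hqi ▸ (by rw [hq, ← hh, Equiv.Perm.inv_def, Equiv.symm_apply_apply] : j = q)).symm
      have h2 : (w j : ℕ) ≠ n - 1 := fun hh => h1 (Fin.ext (hh.trans hl.symm))
      have := (w j).isLt
      omega
    have hlt : w j < w i := by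
      rw [Fin.lt_def, hwi, hl]
      exact hwj
    have F1 := key_formula' i j hij w hlt
    have F2 : ((Finset.Ioo i j).filter fun k => w j < w k ∧ w k < w i).card
        ≤ (j : ℕ) - (i : ℕ) - 1 := hcard ▸ Finset.card_filter_le _ _
    have hsq : s q = j := by rw [hqi, hs, Equiv.swap_apply_left]
    rw [hsq] at F4
    rw [← hq, hqi] at F3
    rw [← hs] at F1
    omega
  · by_cases hqj : q = j
    · have hwj : w j = last := hqj ▸ hwq
      have hwi : (w i : ℕ) < n - 1 := by
        have h1 : w i ≠ last := by
          intro hh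
          exact hne ((hqj ▸ (by rw [hq, ← hh, Equiv.Perm.inv_def, Equiv.symm_apply_apply] : i = q)))
        have h2 : (w i : ℕ) ≠ n - 1 := fun hh => h1 (Fin.ext (hh.trans hl.symm))
        have := (w i).isLt
        omega
      have hlt : w i < w j := by
        rw [Fin.lt_def, hwj, hl]
        exact hwi
      have F1 := key_formula i j hij w hlt
      have F2 : ((Finset.Ioo i j).filter fun k => w i < w k ∧ w k < w j).card
          ≤ (j : ℕ) - (i : ℕ) - 1 := hcard ▸ Finset.card_filter_le _ _
      have hsq : s q = i := by rw [hqj, hs, Equiv.swap_apply_right]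
      rw [hsq] at F4
      rw [← hq, hqj] at F3
      rw [← hs] at F1
      omega
    · have hsq : s q = q := by rw [hs]; exact Equiv.swap_apply_of_ne_of_ne hqi hqj
      rw [hsq] at F4
      rw [← hq] at F3
      omega
end

section
/- Let n be a positive integer, 1 ≤ i < j ≤ n, let o ∈ S_n be the n-cycle with o(i) = i+1 for 1 ≤ i ≤ n−1 and o(n) = 1, and let w ∈ S_n with w(i) ≠ n and w(j) ≠ n. Then ℓ(w·s_{ij}) = ℓ(w) + 1 if and only if ℓ((o∘w)·s_{ij}) = ℓ(o∘w) + 1, and ℓ(w·s_{ij}) = ℓ(w) − 2(j−i) + 1 if and only if ℓ((o∘w)·s_{ij}) = ℓ(o∘w) − 2(j−i) + 1. -/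
lemma invLen_shift {n : ℕ} (hn : 0 < n) (o : Equiv.Perm (Fin n))
    (ho : ∀ a : Fin n, (o a : ℕ) = ((a : ℕ) + 1) % n)
    (u : Equiv.Perm (Fin n)) :
    invLen (o * u) + ((n - 1) - ((u.symm ⟨n-1, by omega⟩ : Fin n) : ℕ))
      = invLen u + ((u.symm ⟨n-1, by omega⟩ : Fin n) : ℕ) := by
  set T : Fin n := ⟨n-1, by omega⟩ with hT
  set K : Fin n := u.symm T with hK
  have huK : u K = T := u.apply_symm_apply T
  have hne : ∀ x : Fin n, x ≠ K → (u x : ℕ) < n - 1 := by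
    intro x hx
    have h1 : u x ≠ T := fun h => hx (by rw [← huK] at h; exact u.injective h)
    have h2 : (u x : ℕ) ≠ n - 1 := fun h => h1 (Fin.ext h)
    have := (u x).isLt
    omega
  have hoval : ∀ x : Fin n, (x : ℕ) < n - 1 → ((o x : ℕ) = (x : ℕ) + 1) := by
    intro x hx; rw [ho x, Nat.mod_eq_of_lt (by omega)]
  have hoT : (o T : ℕ) = 0 := by
    rw [ho T]
    have : (T : ℕ) + 1 = n := by simp [hT]; omega
    rw [this, Nat.mod_self]
  classical
  set S : Equiv.Perm (Fin n) → Finset (Fin n × Fin n) :=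
    fun v => Finset.univ.filter fun p : Fin n × Fin n => p.1 < p.2 ∧ v p.2 < v p.1 with hS
  have key : ∀ v, invLen v = (S v).card := fun v => rfl
  set P : Fin n × Fin n → Prop := fun p => p.1 ≠ K ∧ p.2 ≠ K with hP
  have split : ∀ v : Equiv.Perm (Fin n),
      (S v).card = ((S v).filter P).card + ((S v).filter fun p => ¬ P p).card := by
    intro v
    rw [Finset.card_filter_add_card_filter_not]
  have hfil : (S u).filter P = (S (o * u)).filter P := by
    ext p
    simp only [hS, hP, Finset.mem_filter, Finset.mem_univ, true_and]
    simp only [Equiv.Perm.mul_apply]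
    constructor
    · rintro ⟨⟨h1, h2⟩, h3, h4⟩
      refine ⟨⟨h1, ?_⟩, h3, h4⟩
      have v2 := hoval (u p.2) (hne p.2 h4)
      have v1 := hoval (u p.1) (hne p.1 h3)
      rw [Fin.lt_def] at h2 ⊢; omega
    · rintro ⟨⟨h1, h2⟩, h3, h4⟩
      refine ⟨⟨h1, ?_⟩, h3, h4⟩
      have v2 := hoval (u p.2) (hne p.2 h4)
      have v1 := hoval (u p.1) (hne p.1 h3)
      rw [Fin.lt_def] at h2 ⊢; omega
  have hcard1 : ((S u).filter fun p => ¬ P p).card = (n - 1) - (K : ℕ) := by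
    have heq : ((S u).filter fun p => ¬ P p)
        = (Finset.Ioi K).image fun b => (K, b) := by
      ext p
      simp only [hS, hP, Finset.mem_filter, Finset.mem_univ, true_and,
        Finset.mem_image, Finset.mem_Ioi, not_and_or, not_not]
      constructor
      · rintro ⟨⟨h1, h2⟩, h3⟩
        have hp2 : p.2 ≠ K := by
          intro hk
          rw [hk, huK] at h2
          rw [Fin.lt_def] at h2
          have := (u p.1).isLt
          simp [hT] at h2
          omega
        have hp1 : p.1 = K := by tauto
        exact ⟨p.2, hp1 ▸ h1, by rw [← hp1]⟩
      · rintro ⟨b, hb, rfl⟩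
        refine ⟨⟨hb, ?_⟩, Or.inl rfl⟩
        have := hne b (ne_of_gt hb)
        rw [huK, Fin.lt_def]
        simp [hT]
        omega
    rw [heq, Finset.card_image_of_injective _ (fun a b h => (Prod.mk.injEq _ _ _ _ ▸ h).2),
      Fin.card_Ioi]
  have hcard2 : ((S (o * u)).filter fun p => ¬ P p).card = (K : ℕ) := by
    have heq : ((S (o * u)).filter fun p => ¬ P p)
        = (Finset.Iio K).image fun a => (a, K) := by
      ext p
      simp only [hS, hP, Finset.mem_filter, Finset.mem_univ, true_and,
        Finset.mem_image, Finset.mem_Iio, not_and_or, not_not]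
      simp only [Equiv.Perm.mul_apply]
      constructor
      · rintro ⟨⟨h1, h2⟩, h3⟩
        have hp1 : p.1 ≠ K := by
          intro hk
          rw [hk, huK] at h2
          rw [Fin.lt_def, hoT] at h2
          omega
        have hp2 : p.2 = K := by tauto
        exact ⟨p.1, hp2 ▸ h1, by rw [← hp2]⟩
      · rintro ⟨a, ha, rfl⟩
        refine ⟨⟨ha, ?_⟩, Or.inr rfl⟩
        have h1 := hne a (ne_of_lt ha)
        have v1 := hoval (u a) h1
        rw [huK, Fin.lt_def, hoT]
        show (0:ℕ) < (o (u a) : ℕ)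
        omega
    rw [heq, Finset.card_image_of_injective _ (fun a b h => (Prod.mk.injEq _ _ _ _ ▸ h).1),
      Fin.card_Iio]
  rw [key, key, split u, split (o * u), hfil, hcard1, hcard2]
  omega

/-- Let `o` be the cyclic shift `o(i) = i + 1 (mod n)`, `1 ≤ i < j ≤ n`, and
`w ∈ S_n` with `w(i) ≠ n` and `w(j) ≠ n` (the top value `n` is modeled by the
top element `n−1` of `Fin n`).  Then `ℓ(w·s_{ij}) = ℓ(w) + 1` iff
`ℓ((o∘w)·s_{ij}) = ℓ(o∘w) + 1`, and `ℓ(w·s_{ij}) = ℓ(w) − 2(j−i) + 1` iff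
`ℓ((o∘w)·s_{ij}) = ℓ(o∘w) − 2(j−i) + 1`. -/
theorem length_conditions_invariant_of_ne_top
    (n : ℕ) (hn : 0 < n) (o : Equiv.Perm (Fin n))
    (ho : ∀ a : Fin n, (o a : ℕ) = ((a : ℕ) + 1) % n)
    (i j : Fin n) (hij : i < j) (w : Equiv.Perm (Fin n))
    (hwi : (w i : ℕ) ≠ n - 1) (hwj : (w j : ℕ) ≠ n - 1) :
    ((invLen (w * Equiv.swap i j) : ℤ) = (invLen w : ℤ) + 1 ↔
        (invLen ((o * w) * Equiv.swap i j) : ℤ) = (invLen (o * w) : ℤ) + 1) ∧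
      ((invLen (w * Equiv.swap i j) : ℤ)
          = (invLen w : ℤ) - 2 * ((j : ℤ) - (i : ℤ)) + 1 ↔
        (invLen ((o * w) * Equiv.swap i j) : ℤ)
          = (invLen (o * w) : ℤ) - 2 * ((j : ℤ) - (i : ℤ)) + 1) := by
  have h1 := invLen_shift hn o ho w
  have h2 := invLen_shift hn o ho (w * Equiv.swap i j)
  have hsymm : (w * Equiv.swap i j).symm ⟨n-1, by omega⟩ = w.symm ⟨n-1, by omega⟩ := by
    rw [Equiv.symm_apply_eq]
    have hi : w.symm ⟨n-1, by omega⟩ ≠ i := by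
      intro h; apply hwi
      have := w.apply_symm_apply (⟨n-1, by omega⟩ : Fin n)
      rw [h] at this; rw [this]
    have hj : w.symm ⟨n-1, by omega⟩ ≠ j := by
      intro h; apply hwj
      have := w.apply_symm_apply (⟨n-1, by omega⟩ : Fin n)
      rw [h] at this; rw [this]
    rw [Equiv.Perm.mul_apply, Equiv.swap_apply_of_ne_of_ne hi hj,
      w.apply_symm_apply]
  rw [← mul_assoc, hsymm] at h2
  have hk := ((w.symm ⟨n-1, by omega⟩ : Fin n)).isLt
  have key : (invLen ((o * w) * Equiv.swap i j) : ℤ) + (invLen w : ℤ)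
      = (invLen (w * Equiv.swap i j) : ℤ) + (invLen (o * w) : ℤ) := by
    omega
  constructor <;> constructor <;> intro h <;> linarith [key, h]
end

section
/- Let n be a positive integer, 1 ≤ i < j ≤ n, let o ∈ S_n be the n-cycle with o(i) = i+1 for 1 ≤ i ≤ n−1 and o(n) = 1, and let w ∈ S_n with w(j) = n. If ℓ(w·s_{ij}) = ℓ(w) + 1 or ℓ(w·s_{ij}) = ℓ(w) − 2(j−i) + 1, then in fact ℓ(w·s_{ij}) = ℓ(w) + 1 and ℓ((o∘w)·s_{ij}) = ℓ(o∘w) − 2(j−i) + 1. -/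
open Finset Equiv

section Inversions

variable {n : ℕ}

def invSet (w : Perm (Fin n)) : Finset (Fin n × Fin n) :=
  univ.filter fun p => p.1 < p.2 ∧ w p.2 < w p.1

@[simp]
theorem mem_invSet {w : Perm (Fin n)} {p : Fin n × Fin n} :
    p ∈ invSet w ↔ p.1 < p.2 ∧ w p.2 < w p.1 := by
  simp [invSet]

theorem card_invSet (w : Perm (Fin n)) : #(invSet w) = invLen w := rfl

theorem invLen_mul_inv_eq_card_sdiff_add_card_sdiff (w s : Perm (Fin n)) :
    invLen (w * s⁻¹) = #(invSet w \ invSet s) + #(invSet s \ invSet w) := by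
  have reindex : invLen (w * s⁻¹) = #{p : Fin n × Fin n | s p.1 < s p.2 ∧ w p.2 < w p.1} :=
    (card_equiv (s.prodCongr s) fun p => by
      change _ ↔ _ ∈ invSet (w * s⁻¹); simp).symm
  rw [reindex, ← card_filter_add_card_filter_not (p := fun p : Fin n × Fin n => p.1 < p.2),
    filter_filter, filter_filter]
  congr 1
  · congr 1
    ext ⟨a, b⟩
    simp only [mem_filter, mem_univ, true_and, mem_sdiff, mem_invSet]
    have := s.injective.ne_iff (x := a) (y := b)
    grind
  · refine card_equiv (prodComm _ _) fun ⟨a, b⟩ => ?_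
    simp only [mem_filter, mem_univ, true_and, mem_sdiff, mem_invSet, prodComm_apply, Prod.swap]
    have := s.injective.ne_iff (x := a) (y := b)
    have := w.injective.ne_iff (x := a) (y := b)
    grind

theorem invLen_mul_inv_add_two_mul_card_inter (w s : Perm (Fin n)) :
    invLen (w * s⁻¹) + 2 * #(invSet s ∩ invSet w) = invLen w + invLen s := by
  have hw := card_sdiff_add_card_inter (invSet w) (invSet s)
  have hs := card_sdiff_add_card_inter (invSet s) (invSet w)
  rw [invLen_mul_inv_eq_card_sdiff_add_card_sdiff, ← card_invSet w, ← card_invSet s, ← hw, ← hs,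
    inter_comm]
  ring

end Inversions

section Transposition

variable {n : ℕ} {i j : Fin n}

theorem invSet_swap (hij : i < j) :
    invSet (swap i j) = {i} ×ˢ Ioo i j ∪ Ioo i j ×ˢ {j} ∪ {(i, j)} := by
  ext ⟨a, b⟩
  simp only [mem_invSet, mem_union, mem_product, mem_singleton, mem_Ioo, Prod.mk.injEq,
    swap_apply_def]
  simp only [Fin.lt_def, Fin.ext_iff] at hij ⊢
  split_ifs <;> omega

theorem invLen_swap (hij : i < j) : (invLen (swap i j) : ℤ) = 2 * ((j : ℤ) - i) - 1 := by
  have hdisj₁ : Disjoint ({i} ×ˢ Ioo i j) (Ioo i j ×ˢ {j}) := by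
    simp only [disjoint_left, mem_product, mem_singleton, mem_Ioo]
    rintro ⟨a, b⟩ ⟨rfl, -, hb⟩ ⟨-, rfl⟩
    exact hb.false
  have hdisj₂ : Disjoint ({i} ×ˢ Ioo i j ∪ Ioo i j ×ˢ {j}) {(i, j)} := by
    simp only [disjoint_left, mem_union, mem_product, mem_singleton, mem_Ioo]
    rintro ⟨a, b⟩ (⟨-, -, hb⟩ | ⟨⟨ha, -⟩, -⟩) ⟨rfl, rfl⟩
    exacts [hb.false, ha.false]
  rw [← card_invSet, invSet_swap hij, card_union_of_disjoint hdisj₂,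
    card_union_of_disjoint hdisj₁, card_product, card_product, Fin.card_Ioo]
  simp only [Fin.lt_def] at hij
  simp only [card_singleton, one_mul, mul_one, Nat.cast_add, Nat.cast_one]
  omega

theorem invSet_swap_inter_subset_of_forall_apply_le (hij : i < j) {w : Perm (Fin n)}
    (hw : ∀ k, w k ≤ w j) : invSet (swap i j) ∩ invSet w ⊆ {i} ×ˢ Ioo i j := by
  rw [invSet_swap hij]
  rintro ⟨a, b⟩ hab
  simp only [mem_inter, mem_union, mem_product, mem_singleton, mem_Ioo, mem_invSet,
    Prod.mk.injEq] at hab ⊢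
  rcases hab with ⟨(hab | ⟨-, rfl⟩) | ⟨-, rfl⟩, -, hwb⟩
  · exact hab
  all_goals exact absurd (hw a) (not_le.2 hwb)

theorem invSet_swap_subset_of_forall_le_apply (hij : i < j) {v : Perm (Fin n)}
    (hv : ∀ k, v j ≤ v k) (hvi : ∀ k ∈ Ioo i j, v k < v i) : invSet (swap i j) ⊆ invSet v := by
  have hvj : ∀ k, k < j → v j < v k := fun k hk => (hv k).lt_of_ne (v.injective.ne hk.ne')
  rw [invSet_swap hij]
  rintro ⟨a, b⟩ hab
  simp only [mem_union, mem_product, mem_singleton, mem_Ioo, Prod.mk.injEq] at hab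
  rcases hab with (⟨rfl, hb⟩ | ⟨ha, rfl⟩) | ⟨rfl, rfl⟩
  · exact mem_invSet.2 ⟨hb.1, hvi b (mem_Ioo.2 hb)⟩
  · exact mem_invSet.2 ⟨ha.2, hvj a ha.2⟩
  · exact mem_invSet.2 ⟨hij, hvj a hij⟩

theorem invLen_mul_swap_of_forall_apply_le (hij : i < j) {w : Perm (Fin n)}
    (hw : ∀ k, w k ≤ w j)
    (h : (invLen (w * swap i j) : ℤ) = invLen w + 1 ∨
        (invLen (w * swap i j) : ℤ) = invLen w - 2 * ((j : ℤ) - i) + 1) :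
    (invLen (w * swap i j) : ℤ) = invLen w + 1 ∧ ∀ k ∈ Ioo i j, w k < w i := by
  have hsub := invSet_swap_inter_subset_of_forall_apply_le hij hw
  have hformula := invLen_mul_inv_add_two_mul_card_inter w (swap i j)
  have hlen := invLen_swap hij
  have hIoo : #({i} ×ˢ Ioo i j) = (j : ℕ) - i - 1 := by
    rw [card_product, card_singleton, one_mul, Fin.card_Ioo]
  have hle := card_le_card hsub
  rw [swap_inv] at hformula
  simp only [Fin.lt_def] at hij
  -- the second alternative would need `2(j − i) − 1` common inversions, more than `j − i − 1`
  have hcard : #(invSet (swap i j) ∩ invSet w) = (j : ℕ) - i - 1 := by omega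
  refine ⟨by omega, fun k hk => ?_⟩
  have hik : (i, k) ∈ invSet (swap i j) ∩ invSet w := by
    rw [eq_of_subset_of_card_le hsub (by omega)]
    exact mem_product.2 ⟨mem_singleton_self i, hk⟩
  exact (mem_invSet.1 (mem_inter.1 hik).2).2

theorem invLen_mul_swap_of_forall_le_apply (hij : i < j) {v : Perm (Fin n)}
    (hv : ∀ k, v j ≤ v k) (hvi : ∀ k ∈ Ioo i j, v k < v i) :
    (invLen (v * swap i j) : ℤ) = invLen v - 2 * ((j : ℤ) - i) + 1 := by
  have hformula := invLen_mul_inv_add_two_mul_card_inter v (swap i j)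
  rw [swap_inv, inter_eq_left.2 (invSet_swap_subset_of_forall_le_apply hij hv hvi),
    card_invSet] at hformula
  have hlen := invLen_swap hij
  omega

end Transposition

theorem length_conditions_of_apply_right_eq_top_general
    (n : ℕ) (o : Equiv.Perm (Fin n))
    (ho : ∀ a : Fin n, (o a : ℕ) = ((a : ℕ) + 1) % n)
    (i j : Fin n) (hij : i < j) (w : Equiv.Perm (Fin n))
    (hwj : (w j : ℕ) = n - 1)
    (h : (invLen (w * Equiv.swap i j) : ℤ) = (invLen w : ℤ) + 1 ∨
        (invLen (w * Equiv.swap i j) : ℤ)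
          = (invLen w : ℤ) - 2 * ((j : ℤ) - (i : ℤ)) + 1) :
    (invLen (w * Equiv.swap i j) : ℤ) = (invLen w : ℤ) + 1 ∧
      (invLen ((o * w) * Equiv.swap i j) : ℤ)
        = (invLen (o * w) : ℤ) - 2 * ((j : ℤ) - (i : ℤ)) + 1 := by
  have hw : ∀ k, w k ≤ w j := fun k => Fin.le_def.2 (hwj ▸ Nat.le_sub_one_of_lt (w k).isLt)
  obtain ⟨hlen, hwi⟩ := invLen_mul_swap_of_forall_apply_le hij hw h
  have ho_top : (o (w j) : ℕ) = 0 := by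
    rw [ho, hwj, Nat.sub_add_cancel i.pos, Nat.mod_self]
  have ho_lt : ∀ a b : Fin n, a < b → (o a : ℕ) = a + 1 := fun a b hab => by
    rw [ho, Nat.mod_eq_of_lt (by have := b.isLt; rw [Fin.lt_def] at hab; omega)]
  refine ⟨hlen, invLen_mul_swap_of_forall_le_apply hij (fun k => ?_) fun k hk => ?_⟩
  · rw [Fin.le_def, Perm.mul_apply, ho_top]
    exact Nat.zero_le _
  · have hwk := hwi k hk
    have hwi_lt : w i < w j := (hw i).lt_of_ne (w.injective.ne hij.ne)
    rw [Fin.lt_def, Perm.mul_apply, Perm.mul_apply, ho_lt _ _ hwk, ho_lt _ _ hwi_lt]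
    exact Nat.succ_lt_succ hwk

/-- Let `o` be the cyclic shift `o(i) = i + 1 (mod n)`, `1 ≤ i < j ≤ n`, and
`w ∈ S_n` with `w(j) = n` (the top value `n` is modeled by the top element
`n−1` of `Fin n`).  If `ℓ(w·s_{ij}) = ℓ(w) + 1` or
`ℓ(w·s_{ij}) = ℓ(w) − 2(j−i) + 1`, then in fact `ℓ(w·s_{ij}) = ℓ(w) + 1` and
`ℓ((o∘w)·s_{ij}) = ℓ(o∘w) − 2(j−i) + 1`. -/
theorem length_conditions_of_apply_right_eq_top
    (n : ℕ) (hn : 0 < n) (o : Equiv.Perm (Fin n))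
    (ho : ∀ a : Fin n, (o a : ℕ) = ((a : ℕ) + 1) % n)
    (i j : Fin n) (hij : i < j) (w : Equiv.Perm (Fin n))
    (hwj : (w j : ℕ) = n - 1)
    (h : (invLen (w * Equiv.swap i j) : ℤ) = (invLen w : ℤ) + 1 ∨
        (invLen (w * Equiv.swap i j) : ℤ)
          = (invLen w : ℤ) - 2 * ((j : ℤ) - (i : ℤ)) + 1) :
    (invLen (w * Equiv.swap i j) : ℤ) = (invLen w : ℤ) + 1 ∧
      (invLen ((o * w) * Equiv.swap i j) : ℤ)
        = (invLen (o * w) : ℤ) - 2 * ((j : ℤ) - (i : ℤ)) + 1 :=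
  length_conditions_of_apply_right_eq_top_general n o ho i j hij w hwj h
end

section
/- Let n be a positive integer, 1 ≤ i < j ≤ n, let o ∈ S_n be the n-cycle with o(i) = i+1 for 1 ≤ i ≤ n−1 and o(n) = 1, and let w ∈ S_n with w(i) = n. If ℓ(w·s_{ij}) = ℓ(w) + 1 or ℓ(w·s_{ij}) = ℓ(w) − 2(j−i) + 1, then in fact ℓ(w·s_{ij}) = ℓ(w) − 2(j−i) + 1 and ℓ((o∘w)·s_{ij}) = ℓ(o∘w) + 1. -/
open Finset

def ltSign {α : Type*} [LinearOrder α] (a b : α) : ℤ :=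
  (if a < b then 1 else 0) - (if b < a then 1 else 0)

section
variable {α : Type*} [LinearOrder α] {a b : α}

lemma ltSign_of_lt (h : a < b) : ltSign a b = 1 := by simp [ltSign, h, h.not_gt]

lemma ltSign_of_gt (h : b < a) : ltSign a b = -1 := by simp [ltSign, h, h.not_gt]

lemma ltSign_eq_one_sub (h : a ≠ b) : ltSign a b = 1 - 2 * if b < a then 1 else 0 := by
  rcases h.lt_or_gt with h | h <;> simp [ltSign, h, h.not_gt]

lemma ltSign_eq_sub_one (h : a ≠ b) : ltSign a b = 2 * (if a < b then 1 else 0) - 1 := by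
  rcases h.lt_or_gt with h | h <;> simp [ltSign, h, h.not_gt]

end

variable {n : ℕ}

lemma invLen_eq_sum (u : Equiv.Perm (Fin n)) :
    (invLen u : ℤ) = ∑ p : Fin n × Fin n, if p.1 < p.2 ∧ u p.2 < u p.1 then 1 else 0 := by
  simp [invLen, sum_boole]

lemma invLen_mul_of_involutive (u s : Equiv.Perm (Fin n)) (hs : Function.Involutive s) :
    (invLen (u * s) : ℤ) = invLen u +
      ∑ p : Fin n × Fin n, if p.1 < p.2 ∧ s p.2 < s p.1 then ltSign (u p.1) (u p.2) else 0 := by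
  have h_reindex : (invLen (u * s) : ℤ) =
      ∑ p : Fin n × Fin n, if s p.1 < s p.2 ∧ u p.2 < u p.1 then 1 else 0 := by
    rw [invLen_eq_sum]
    refine Fintype.sum_equiv (Equiv.prodCongr s s) _ _ fun p => ?_
    simp only [Equiv.prodCongr_apply, Prod.map, hs p.1, hs p.2]
    rfl
  have h_flip : ∑ p : Fin n × Fin n,
      (if p.1 < p.2 ∧ s p.2 < s p.1 ∧ u p.1 < u p.2 then (1 : ℤ) else 0) =
      ∑ p : Fin n × Fin n, if p.2 < p.1 ∧ s p.1 < s p.2 ∧ u p.2 < u p.1 then 1 else 0 :=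
    Fintype.sum_equiv (Equiv.prodComm _ _) _ _ fun p => rfl
  -- The two indicators differ only on pairs whose order `s` reverses.
  have h_pointwise : ∀ p : Fin n × Fin n,
      (if s p.1 < s p.2 ∧ u p.2 < u p.1 then (1 : ℤ) else 0) =
        (if p.1 < p.2 ∧ u p.2 < u p.1 then 1 else 0) +
        ((if p.2 < p.1 ∧ s p.1 < s p.2 ∧ u p.2 < u p.1 then 1 else 0) -
          (if p.1 < p.2 ∧ s p.2 < s p.1 ∧ u p.2 < u p.1 then 1 else 0)) := by
    intro p
    have := s.injective.eq_iff (a := p.1) (b := p.2)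
    split_ifs <;> grind
  rw [h_reindex, Fintype.sum_congr _ _ h_pointwise, sum_add_distrib, ← invLen_eq_sum,
    sum_sub_distrib, ← h_flip, ← sum_sub_distrib]
  congr 1
  refine Fintype.sum_congr _ _ fun p => ?_
  unfold ltSign
  split_ifs <;> grind

lemma swap_apply_lt_swap_apply_iff {i j a b : Fin n} (hij : i < j) (hab : a < b) :
    Equiv.swap i j b < Equiv.swap i j a ↔ (a = i ∧ b ∈ Ioc i j) ∨ (a ∈ Ioo i j ∧ b = j) := by
  simp only [Equiv.swap_apply_def, mem_Ioc, mem_Ioo, Fin.lt_def, Fin.le_def, Fin.ext_iff] at *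
  split_ifs <;> omega

lemma invLen_mul_swap (u : Equiv.Perm (Fin n)) {i j : Fin n} (hij : i < j) :
    (invLen (u * Equiv.swap i j) : ℤ) = invLen u + ∑ b ∈ Ioc i j, ltSign (u i) (u b) +
      ∑ a ∈ Ioo i j, ltSign (u a) (u j) := by
  have h_reversed : univ.filter (fun p : Fin n × Fin n =>
      p.1 < p.2 ∧ Equiv.swap i j p.2 < Equiv.swap i j p.1) = {i} ×ˢ Ioc i j ∪ Ioo i j ×ˢ {j} := by
    ext ⟨a, b⟩
    simp only [mem_filter, mem_univ, true_and, mem_union, mem_product, mem_singleton]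
    constructor
    · rintro ⟨hab, h⟩
      exact (swap_apply_lt_swap_apply_iff hij hab).1 h
    · intro h
      have hab : a < b := by
        rcases h with ⟨rfl, hb⟩ | ⟨ha, rfl⟩
        exacts [(mem_Ioc.1 hb).1, (mem_Ioo.1 ha).2]
      exact ⟨hab, (swap_apply_lt_swap_apply_iff hij hab).2 h⟩
  have h_disjoint : Disjoint ({i} ×ˢ Ioc i j) (Ioo i j ×ˢ {j}) := by
    simp only [disjoint_left, mem_product, mem_singleton, mem_Ioo, not_and]
    rintro ⟨a, b⟩ ⟨rfl, -⟩ ⟨h, -⟩ -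
    exact lt_irrefl _ h
  rw [invLen_mul_of_involutive u _ (Equiv.swap_apply_self i j), ← sum_filter, h_reversed,
    sum_union h_disjoint, sum_product, sum_product, sum_singleton, add_assoc]
  simp_rw [sum_singleton]

lemma card_Ioc_eq_card_Ioo_add_one {i j : Fin n} (hij : i < j) :
    #(Ioc i j) = #(Ioo i j) + 1 := by
  rw [Fin.card_Ioc, Fin.card_Ioo]; have : (i : ℕ) < j := hij; omega

lemma invLen_mul_swap_of_forall_lt (u : Equiv.Perm (Fin n)) {i j : Fin n} (hij : i < j)
    (hmax : ∀ k, k ≠ i → u k < u i) :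
    (invLen (u * Equiv.swap i j) : ℤ) = invLen u - 1 - 2 * #{k ∈ Ioo i j | u j < u k} := by
  have h_left : ∑ b ∈ Ioc i j, ltSign (u i) (u b) = -(#(Ioo i j) + 1 : ℤ) := by
    rw [sum_congr rfl fun b hb => ltSign_of_gt (hmax b (mem_Ioc.1 hb).1.ne'), sum_const,
      card_Ioc_eq_card_Ioo_add_one hij]
    simp
  have h_right :
      ∑ a ∈ Ioo i j, ltSign (u a) (u j) = #(Ioo i j) - 2 * #{k ∈ Ioo i j | u j < u k} := by
    rw [sum_congr rfl fun a ha => ltSign_eq_one_sub (u.injective.ne (mem_Ioo.1 ha).2.ne),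
      sum_sub_distrib, ← mul_sum, sum_boole]
    simp
  rw [invLen_mul_swap u hij, h_left, h_right]
  ring

lemma invLen_mul_swap_of_forall_gt (u : Equiv.Perm (Fin n)) {i j : Fin n} (hij : i < j)
    (hmin : ∀ k, k ≠ i → u i < u k) :
    (invLen (u * Equiv.swap i j) : ℤ) = invLen u + 1 + 2 * #{k ∈ Ioo i j | u k < u j} := by
  have h_left : ∑ b ∈ Ioc i j, ltSign (u i) (u b) = (#(Ioo i j) + 1 : ℤ) := by
    rw [sum_congr rfl fun b hb => ltSign_of_lt (hmin b (mem_Ioc.1 hb).1.ne'), sum_const,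
      card_Ioc_eq_card_Ioo_add_one hij]
    simp
  have h_right :
      ∑ a ∈ Ioo i j, ltSign (u a) (u j) = 2 * #{k ∈ Ioo i j | u k < u j} - #(Ioo i j) := by
    rw [sum_congr rfl fun a ha => ltSign_eq_sub_one (u.injective.ne (mem_Ioo.1 ha).2.ne),
      sum_sub_distrib, ← mul_sum, sum_boole]
    simp
  rw [invLen_mul_swap u hij, h_left, h_right]
  ring

lemma apply_lt_of_val_apply_eq_pred (w : Equiv.Perm (Fin n)) {i k : Fin n}
    (hwi : (w i : ℕ) = n - 1) (hk : k ≠ i) : w k < w i := by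
  have : (w k : ℕ) ≠ w i := fun h => hk (w.injective (Fin.ext h))
  rw [Fin.lt_def]
  omega

def IsCyclicShift (o : Equiv.Perm (Fin n)) : Prop :=
  ∀ a : Fin n, (o a : ℕ) = ((a : ℕ) + 1) % n

lemma IsCyclicShift.val_apply_of_lt {o : Equiv.Perm (Fin n)} (ho : IsCyclicShift o)
    {a b : Fin n} (h : a < b) : (o a : ℕ) = a + 1 := by
  rw [ho, Nat.mod_eq_of_lt (lt_of_le_of_lt h b.isLt)]

lemma IsCyclicShift.val_apply_of_val_eq_pred {o : Equiv.Perm (Fin n)} (ho : IsCyclicShift o)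
    {a : Fin n} (ha : (a : ℕ) = n - 1) : (o a : ℕ) = 0 := by
  rw [ho, ha, Nat.sub_add_cancel (Nat.one_le_of_lt a.isLt), Nat.mod_self]

theorem length_conditions_of_apply_left_eq_top_general
    (n : ℕ) (o : Equiv.Perm (Fin n))
    (ho : ∀ a : Fin n, (o a : ℕ) = ((a : ℕ) + 1) % n)
    (i j : Fin n) (hij : i < j) (w : Equiv.Perm (Fin n))
    (hwi : (w i : ℕ) = n - 1)
    (h : (invLen (w * Equiv.swap i j) : ℤ) = (invLen w : ℤ) + 1 ∨
        (invLen (w * Equiv.swap i j) : ℤ)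
          = (invLen w : ℤ) - 2 * ((j : ℤ) - (i : ℤ)) + 1) :
    (invLen (w * Equiv.swap i j) : ℤ)
        = (invLen w : ℤ) - 2 * ((j : ℤ) - (i : ℤ)) + 1 ∧
      (invLen ((o * w) * Equiv.swap i j) : ℤ) = (invLen (o * w) : ℤ) + 1 := by
  have hmax : ∀ k, k ≠ i → w k < w i := fun k => apply_lt_of_val_apply_eq_pred w hwi
  have h_desc := invLen_mul_swap_of_forall_lt w hij hmax
  have h_card_Ioo : #(Ioo i j) + 1 + (i : ℕ) = j := by
    rw [Fin.card_Ioo]; have : (i : ℕ) < j := hij; omega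
  have h_card : #{k ∈ Ioo i j | w j < w k} = #(Ioo i j) := by
    have := card_filter_le (Ioo i j) (fun k => w j < w k)
    omega
  have h_between : ∀ k ∈ Ioo i j, w j < w k := card_filter_eq_iff.1 h_card
  have h_shift : ∀ k, k ≠ i → ((o * w) k : ℕ) = w k + 1 := fun k hk =>
    IsCyclicShift.val_apply_of_lt ho (hmax k hk)
  have hmin : ∀ k, k ≠ i → (o * w) i < (o * w) k := fun k hk => by
    rw [Fin.lt_def, h_shift k hk, Equiv.Perm.mul_apply,
      IsCyclicShift.val_apply_of_val_eq_pred ho hwi]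
    omega
  have h_none : #{k ∈ Ioo i j | (o * w) k < (o * w) j} = 0 := by
    refine card_eq_zero.2 (filter_eq_empty_iff.2 fun k hk => ?_)
    rw [Fin.lt_def, h_shift k (mem_Ioo.1 hk).1.ne', h_shift j hij.ne']
    have := Fin.lt_def.1 (h_between k hk)
    omega
  refine ⟨by omega, ?_⟩
  rw [invLen_mul_swap_of_forall_gt (o * w) hij hmin, h_none]
  simp

/-- Let `o` be the cyclic shift `o(i) = i + 1 (mod n)`, `1 ≤ i < j ≤ n`, and
`w ∈ S_n` with `w(i) = n` (the top value `n` is modeled by the top element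
`n−1` of `Fin n`).  If `ℓ(w·s_{ij}) = ℓ(w) + 1` or
`ℓ(w·s_{ij}) = ℓ(w) − 2(j−i) + 1`, then in fact
`ℓ(w·s_{ij}) = ℓ(w) − 2(j−i) + 1` and `ℓ((o∘w)·s_{ij}) = ℓ(o∘w) + 1`. -/
theorem length_conditions_of_apply_left_eq_top
    (n : ℕ) (hn : 0 < n) (o : Equiv.Perm (Fin n))
    (ho : ∀ a : Fin n, (o a : ℕ) = ((a : ℕ) + 1) % n)
    (i j : Fin n) (hij : i < j) (w : Equiv.Perm (Fin n))
    (hwi : (w i : ℕ) = n - 1)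
    (h : (invLen (w * Equiv.swap i j) : ℤ) = (invLen w : ℤ) + 1 ∨
        (invLen (w * Equiv.swap i j) : ℤ)
          = (invLen w : ℤ) - 2 * ((j : ℤ) - (i : ℤ)) + 1) :
    (invLen (w * Equiv.swap i j) : ℤ)
        = (invLen w : ℤ) - 2 * ((j : ℤ) - (i : ℤ)) + 1 ∧
      (invLen ((o * w) * Equiv.swap i j) : ℤ) = (invLen (o * w) : ℤ) + 1 :=
  length_conditions_of_apply_left_eq_top_general n o ho i j hij w hwi h
end

section
/- Let n be a positive integer, and let M be the free module over the polynomial ring R = ℤ[q_1,…,q_{n−1}] with basis {σ_w : w ∈ S_n}. For 1 ≤ i < j ≤ n, let T_{ij} : M → M be the R-linear operator defined on basis elements by T_{ij}(σ_w) = σ_{w·s_{ij}} if ℓ(w·s_{ij}) = ℓ(w) + 1, T_{ij}(σ_w) = q_{ij}·σ_{w·s_{ij}} if ℓ(w·s_{ij}) = ℓ(w) − 2(j−i) + 1, and T_{ij}(σ_w) = 0 otherwise, where q_{ij} = q_i q_{i+1} ⋯ q_{j−1}. Let O : M → M be the R-linear operator defined by O(σ_w) = q_{rn}·σ_{o∘w},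 where r = w^{−1}(n), q_{rn} = q_r q_{r+1} ⋯ q_{n−1} (with q_{nn} = 1), and o ∈ S_n is the n-cycle with o(i) = i+1 for 1 ≤ i ≤ n−1 and o(n) = 1. Then for all 1 ≤ i < j ≤ n the operators commute: T_{ij} ∘ O = O ∘ T_{ij}. -/
noncomputable section

/-- The base ring `R = ℤ[q_1, …, q_{n−1}]`, a polynomial ring in `n − 1`
variables over `ℤ`.  The variable indexed by `t : Fin (n−1)` corresponds to
`q_{t+1}` in 1-based notation. -/
abbrev QRing (n : ℕ) := MvPolynomial (Fin (n - 1)) ℤ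

/-- The variable `q_{s+1}` (1-based), for a 0-based index `s < n − 1`;
by convention `1` out of range (the out-of-range case never occurs below). -/
def qVar (n : ℕ) (s : ℕ) : QRing n :=
  if h : s < n - 1 then MvPolynomial.X (⟨s, h⟩ : Fin (n - 1)) else 1

/-- For 0-based indices `a ≤ b`, the monomial `q_{a+1} q_{a+2} ⋯ q_b`
(1-based), i.e. `q_{ij}` in the paper's notation with `i = a+1`, `j = b+1`. -/
def qProd (n : ℕ) (a b : ℕ) : QRing n :=
  ∏ s ∈ Finset.Ico a b, qVar n s

/-- The free `R`-module `M` with basis `{σ_w : w ∈ S_n}`, realized as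
finitely supported functions `S_n → R`; `σ_w` is `Finsupp.single w 1`. -/
abbrev QMod (n : ℕ) := Equiv.Perm (Fin n) →₀ QRing n

/-- The `R`-linear operator `T_{ij}` with
`T_{ij}(σ_w) = σ_{w·s_{ij}}` if `ℓ(w·s_{ij}) = ℓ(w) + 1`,
`T_{ij}(σ_w) = q_{ij}·σ_{w·s_{ij}}` if `ℓ(w·s_{ij}) = ℓ(w) − 2(j−i) + 1`,
and `T_{ij}(σ_w) = 0` otherwise. -/
def TOp (n : ℕ) (i j : Fin n) : QMod n →ₗ[QRing n] QMod n :=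
  Finsupp.lift (QMod n) (QRing n) (Equiv.Perm (Fin n)) fun w =>
    if (invLen (w * Equiv.swap i j) : ℤ) = (invLen w : ℤ) + 1 then
      Finsupp.single (w * Equiv.swap i j) 1
    else if (invLen (w * Equiv.swap i j) : ℤ)
        = (invLen w : ℤ) - 2 * ((j : ℤ) - (i : ℤ)) + 1 then
      Finsupp.single (w * Equiv.swap i j) (qProd n (i : ℕ) (j : ℕ))
    else 0

/-- The twisted cyclic shift operator `O`, with `O(σ_w) = q_{rn}·σ_{o∘w}`
where `r = w⁻¹(n)` and `q_{rn} = q_r q_{r+1} ⋯ q_{n−1}` (1-based notation;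
in the 0-based model the top value `n` is the top element `⟨n−1, _⟩` of
`Fin n`, and `q_{rn} = qProd n r (n−1)` for the 0-based `r`). -/
def Oop (n : ℕ) (hn : 0 < n) (o : Equiv.Perm (Fin n)) :
    QMod n →ₗ[QRing n] QMod n :=
  Finsupp.lift (QMod n) (QRing n) (Equiv.Perm (Fin n)) fun w =>
    Finsupp.single (o * w)
      (qProd n ((w⁻¹ ⟨n - 1, Nat.sub_lt hn Nat.one_pos⟩ : Fin n) : ℕ) (n - 1))

/-! ### Auxiliary combinatorial lemmas -/

namespace TOpOopAux

variable {n : ℕ}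

lemma swap_reverses {i j x y : Fin n} (hij : i < j) (hxy : x < y) :
    Equiv.swap i j y < Equiv.swap i j x ↔ (x = i ∨ y = j) ∧ i ≤ x ∧ y ≤ j := by
  have hij' : (i : ℕ) < j := hij
  have hxy' : (x : ℕ) < y := hxy
  rw [Equiv.swap_apply_def, Equiv.swap_apply_def]
  split_ifs <;>
    simp only [Fin.lt_def, Fin.le_def, Fin.ext_iff] at * <;> omega

/-- the set of ordered pairs reversed by `swap i j` -/
def Bset (i j : Fin n) : Finset (Fin n × Fin n) :=
  Finset.univ.filter fun p : Fin n × Fin n =>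
    p.1 < p.2 ∧ Equiv.swap i j p.2 < Equiv.swap i j p.1

lemma Bset_card {i j : Fin n} (hij : i < j) :
    (Bset i j).card = 2 * ((j : ℕ) - (i : ℕ)) - 1 := by
  have : Bset i j = ({i} ×ˢ Finset.Ioc i j) ∪ ((Finset.Ioo i j) ×ˢ {j}) := by
    ext p
    simp only [Bset, Finset.mem_filter, Finset.mem_univ, true_and,
      Finset.mem_union, Finset.mem_product, Finset.mem_singleton,
      Finset.mem_Ioc, Finset.mem_Ioo]
    constructor
    · rintro ⟨h1, h2⟩
      rw [swap_reverses hij h1] at h2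
      obtain ⟨h3 | h3, h4, h5⟩ := h2
      · exact Or.inl ⟨h3, h3 ▸ h1, h5⟩
      · rcases eq_or_lt_of_le h4 with h6 | h6
        · exact Or.inl ⟨h6.symm, h6 ▸ h1, h5⟩
        · exact Or.inr ⟨⟨h6, h3 ▸ h1⟩, h3⟩
    · rintro (⟨h1, h2, h3⟩ | ⟨⟨h1, h2⟩, h3⟩)
      · subst h1; exact ⟨h2, (swap_reverses hij h2).2 ⟨Or.inl rfl, le_refl _, h3⟩⟩
      · subst h3; exact ⟨h2, (swap_reverses hij h2).2 ⟨Or.inr rfl, h1.le, le_refl _⟩⟩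
  rw [this, Finset.card_union_of_disjoint, Finset.card_product,
    Finset.card_product, Finset.card_singleton, Finset.card_singleton,
    Fin.card_Ioc, Fin.card_Ioo]
  · have : (i : ℕ) < j := hij
    omega
  · rw [Finset.disjoint_left]
    rintro p hp hq
    simp only [Finset.mem_product, Finset.mem_singleton, Finset.mem_Ioc,
      Finset.mem_Ioo] at hp hq
    exact absurd (hp.1 ▸ hq.1.1) (lt_irrefl i)

def Cset (w : Equiv.Perm (Fin n)) (i j : Fin n) : Finset (Fin n × Fin n) :=
  (Bset i j).filter fun p => w p.2 < w p.1

lemma invLen_mul_swap {i j : Fin n} (hij : i < j) (w : Equiv.Perm (Fin n)) :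
    (invLen (w * Equiv.swap i j) : ℤ) + 2 * ((Cset w i j).card : ℤ)
      = (invLen w : ℤ) + 2 * (((j : ℕ) : ℤ) - ((i : ℕ) : ℤ)) - 1 := by
  set s := Equiv.swap i j with hs
  have hsinv : ∀ x : Fin n, s (s x) = x := fun x => Equiv.swap_apply_self i j x
  have hsplit : ∀ v : Equiv.Perm (Fin n),
      invLen v =
        (Finset.univ.filter fun p : Fin n × Fin n =>
          (p.1 < p.2 ∧ v p.2 < v p.1) ∧ s p.1 < s p.2).card +
        (Finset.univ.filter fun p : Fin n × Fin n =>
          (p.1 < p.2 ∧ v p.2 < v p.1) ∧ s p.2 < s p.1).card := by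
    intro v
    rw [invLen]
    rw [← Finset.card_filter_add_card_filter_not
      (p := fun p : Fin n × Fin n => s p.1 < s p.2), Finset.filter_filter,
      Finset.filter_filter]
    congr 1
    refine congrArg Finset.card ?_
    ext p
    simp only [Finset.mem_filter, Finset.mem_univ, true_and]
    constructor
    · rintro ⟨h1, h2⟩
      refine ⟨h1, ?_⟩
      rcases lt_or_gt_of_ne (s.injective.ne h1.1.ne) with h | h
      · exact absurd h h2
      · exact h
    · rintro ⟨h1, h2⟩
      exact ⟨h1, fun h => absurd h2 (asymm h)⟩
  have hA : (Finset.univ.filter fun p : Fin n × Fin n =>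
        (p.1 < p.2 ∧ (w * s) p.2 < (w * s) p.1) ∧ s p.1 < s p.2).card =
      (Finset.univ.filter fun p : Fin n × Fin n =>
        (p.1 < p.2 ∧ w p.2 < w p.1) ∧ s p.1 < s p.2).card := by
    apply Finset.card_nbij' (fun p => (s p.1, s p.2)) (fun p => (s p.1, s p.2))
    · intro p hp
      simp only [Finset.mem_coe, Finset.mem_filter, Finset.mem_univ, true_and] at hp ⊢
      obtain ⟨⟨h1, h2⟩, h3⟩ := hp
      exact ⟨⟨h3, h2⟩, by rw [hsinv, hsinv]; exact h1⟩
    · intro p hp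
      simp only [Finset.mem_coe, Finset.mem_filter, Finset.mem_univ, true_and] at hp ⊢
      obtain ⟨⟨h1, h2⟩, h3⟩ := hp
      refine ⟨⟨h3, ?_⟩, by rw [hsinv, hsinv]; exact h1⟩
      simp only [Equiv.Perm.mul_apply, hsinv]
      exact h2
    · intro p _; simp [hsinv]
    · intro p _; simp [hsinv]
  have hB : (Finset.univ.filter fun p : Fin n × Fin n =>
        (p.1 < p.2 ∧ (w * s) p.2 < (w * s) p.1) ∧ s p.2 < s p.1).card =
      (Finset.univ.filter fun p : Fin n × Fin n =>
        (p.1 < p.2 ∧ ¬ (w p.2 < w p.1)) ∧ s p.2 < s p.1).card := by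
    apply Finset.card_nbij' (fun p => (s p.2, s p.1)) (fun p => (s p.2, s p.1))
    · intro p hp
      simp only [Finset.mem_coe, Finset.mem_filter, Finset.mem_univ, true_and] at hp ⊢
      simp only [Equiv.Perm.mul_apply] at hp ⊢
      obtain ⟨⟨h1, h2⟩, h3⟩ := hp
      exact ⟨⟨h3, fun h => absurd h2 (asymm h)⟩, by rw [hsinv, hsinv]; exact h1⟩
    · intro p hp
      simp only [Finset.mem_coe, Finset.mem_filter, Finset.mem_univ, true_and] at hp ⊢
      simp only [Equiv.Perm.mul_apply] at hp ⊢
      obtain ⟨⟨h1, h2⟩, h3⟩ := hp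
      refine ⟨⟨h3, ?_⟩, by rw [hsinv, hsinv]; exact h1⟩
      rw [hsinv, hsinv]
      rcases lt_or_gt_of_ne (w.injective.ne h1.ne) with h | h
      · exact h
      · exact absurd h h2
    · intro p _; simp [hsinv]
    · intro p _; simp [hsinv]
  have hBsum : (Finset.univ.filter fun p : Fin n × Fin n =>
        (p.1 < p.2 ∧ ¬ (w p.2 < w p.1)) ∧ s p.2 < s p.1).card
      + (Cset w i j).card = (Bset i j).card := by
    have h0 := Finset.card_filter_add_card_filter_not
      (s := Bset i j) (p := fun p : Fin n × Fin n => w p.2 < w p.1)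
    have h1 : ((Bset i j).filter fun p => ¬ w p.2 < w p.1) =
        Finset.univ.filter (fun p : Fin n × Fin n =>
          (p.1 < p.2 ∧ ¬ (w p.2 < w p.1)) ∧ s p.2 < s p.1) := by
      rw [Bset, ← hs, Finset.filter_filter]
      ext p
      simp only [Finset.mem_filter, Finset.mem_univ, true_and]
      tauto
    rw [h1] at h0
    rw [Cset]
    omega
  have hCw : (Finset.univ.filter fun p : Fin n × Fin n =>
        (p.1 < p.2 ∧ w p.2 < w p.1) ∧ s p.2 < s p.1).card = (Cset w i j).card := by
    rw [Cset, Bset, ← hs, Finset.filter_filter]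
    refine congrArg Finset.card ?_
    ext p
    simp only [Finset.mem_filter, Finset.mem_univ, true_and]
    tauto
  have e1 := hsplit (w * s)
  have e2 := hsplit w
  have e3 := Bset_card hij
  have hk : (i : ℕ) < (j : ℕ) := hij
  rw [hA, hB] at e1
  rw [hCw] at e2
  omega

lemma mem_Cset {w : Equiv.Perm (Fin n)} {i j : Fin n} (hij : i < j)
    {p : Fin n × Fin n} :
    p ∈ Cset w i j ↔
      p.1 < p.2 ∧ (p.1 = i ∨ p.2 = j) ∧ i ≤ p.1 ∧ p.2 ≤ j ∧ w p.2 < w p.1 := by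
  simp only [Cset, Bset, Finset.mem_filter, Finset.mem_univ, true_and]
  constructor
  · rintro ⟨⟨h1, h2⟩, h3⟩
    have := (swap_reverses hij h1).1 h2
    exact ⟨h1, this.1, this.2.1, this.2.2, h3⟩
  · rintro ⟨h1, h2, h3, h4, h5⟩
    exact ⟨⟨h1, (swap_reverses hij h1).2 ⟨h2, h3, h4⟩⟩, h5⟩

lemma Cset_lower {w : Equiv.Perm (Fin n)} {i j : Fin n} (hij : i < j)
    (h : w j < w i) : (j : ℕ) - (i : ℕ) ≤ (Cset w i j).card := by
  rw [← Fin.card_Ioc]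
  apply Finset.card_le_card_of_injOn
    (fun t => if w t < w i then (i, t) else (t, j))
  · intro t ht
    rw [Finset.mem_coe, Finset.mem_Ioc] at ht
    by_cases hw : w t < w i
    · simp only [hw, if_true]
      exact (mem_Cset hij).2 ⟨ht.1, Or.inl rfl, le_refl _, ht.2, hw⟩
    · simp only [hw, if_false]
      have htj : t ≠ j := by rintro rfl; exact hw h
      have h2 : w j < w t := lt_of_lt_of_le h (not_lt.1 hw)
      exact (mem_Cset hij).2 ⟨lt_of_le_of_ne ht.2 htj, Or.inr rfl,
        ht.1.le, le_refl _, h2⟩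
  · intro t1 h1 t2 h2 he
    rw [Finset.coe_Ioc, Set.mem_Ioc] at h1 h2
    by_cases hw1 : w t1 < w i <;> by_cases hw2 : w t2 < w i <;>
      simp only [hw1, hw2, if_true, if_false, Prod.mk.injEq] at he
    · exact he.2
    · exact absurd (he.1 ▸ h2.1) (lt_irrefl _)
    · exact absurd (he.1.symm ▸ h1.1) (lt_irrefl _)
    · exact he.1

lemma Cset_upper {w : Equiv.Perm (Fin n)} {i j : Fin n} (hij : i < j)
    (h : w i < w j) : (Cset w i j).card ≤ (j : ℕ) - (i : ℕ) - 1 := by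
  rw [← Fin.card_Ioo]
  apply Finset.card_le_card_of_injOn (fun p => if p.1 = i then p.2 else p.1)
  · intro p hp
    obtain ⟨h1, h2, h3, h4, h5⟩ := (mem_Cset hij).1 hp
    by_cases hp1 : p.1 = i
    · simp only [hp1, if_true, Finset.mem_coe, Finset.mem_Ioo]
      refine ⟨hp1 ▸ h1, lt_of_le_of_ne h4 ?_⟩
      rintro rfl
      rw [hp1] at h5
      exact absurd h (asymm h5)
    · simp only [hp1, if_false, Finset.mem_coe, Finset.mem_Ioo]
      obtain h2 | h2 := h2
      · exact absurd h2 hp1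
      · exact ⟨lt_of_le_of_ne h3 (Ne.symm hp1), h2 ▸ h1⟩
  · intro p hp q hq he
    rw [Finset.mem_coe, mem_Cset hij] at hp hq
    obtain ⟨p1, p2, p3, p4, p5⟩ := hp
    obtain ⟨q1, q2, q3, q4, q5⟩ := hq
    by_cases e1 : p.1 = i <;> by_cases e2 : q.1 = i <;>
      simp only [e1, e2, if_true, if_false] at he
    · exact Prod.ext (e1.trans e2.symm) he
    · obtain q2 | q2 := q2
      · exact absurd q2 e2
      · exfalso
        rw [e1] at p5
        rw [q2] at q5
        rw [← he] at q5
        exact absurd h (asymm (q5.trans p5))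
    · obtain p2 | p2 := p2
      · exact absurd p2 e1
      · exfalso
        rw [e2] at q5
        rw [p2] at p5
        rw [he] at p5
        exact absurd h (asymm (p5.trans q5))
    · obtain p2 | p2 := p2
      · exact absurd p2 e1
      obtain q2 | q2 := q2
      · exact absurd q2 e2
      · exact Prod.ext he (p2.trans q2.symm)

lemma Cset_le_B {w : Equiv.Perm (Fin n)} {i j : Fin n} (hij : i < j) :
    (Cset w i j).card ≤ 2 * ((j : ℕ) - (i : ℕ)) - 1 :=
  (Finset.card_le_card (Finset.filter_subset _ _)).trans_eq (Bset_card hij)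

lemma invLen_o_mul (hn : 0 < n) (o : Equiv.Perm (Fin n))
    (ho : ∀ a : Fin n, (o a : ℕ) = ((a : ℕ) + 1) % n) (w : Equiv.Perm (Fin n)) :
    (invLen (o * w) : ℤ) + ((n : ℤ) - 1)
      = (invLen w : ℤ)
        + 2 * (((w⁻¹ ⟨n - 1, Nat.sub_lt hn Nat.one_pos⟩ : Fin n) : ℕ) : ℤ) := by
  set top : Fin n := ⟨n - 1, Nat.sub_lt hn Nat.one_pos⟩ with htop
  set r : Fin n := w⁻¹ top with hr
  have hwr : w r = top := Equiv.apply_symm_apply w top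
  have hvo : ∀ a : Fin n, a ≠ top → (o a : ℕ) = (a : ℕ) + 1 := by
    intro a ha
    have h0 : (a : ℕ) < n := a.isLt
    have h1 : (a : ℕ) ≠ n - 1 := fun h => ha (Fin.ext h)
    rw [ho a, Nat.mod_eq_of_lt]
    omega
  have hotop : (o top : ℕ) = 0 := by
    rw [ho top]
    have : (top : ℕ) + 1 = n := by simp only [htop]; omega
    rw [this, Nat.mod_self]
  have hne_top : ∀ a : Fin n, a ≠ r → w a ≠ top := by
    intro a ha h
    apply ha
    exact w.injective (h.trans hwr.symm)
  have hsplit : ∀ v : Equiv.Perm (Fin n), invLen v =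
      (Finset.univ.filter fun p : Fin n × Fin n =>
        (p.1 < p.2 ∧ v p.2 < v p.1) ∧ ¬(p.1 = r ∨ p.2 = r)).card +
      (Finset.univ.filter fun p : Fin n × Fin n =>
        (p.1 < p.2 ∧ v p.2 < v p.1) ∧ (p.1 = r ∨ p.2 = r)).card := by
    intro v
    rw [invLen, ← Finset.card_filter_add_card_filter_not
      (p := fun p : Fin n × Fin n => ¬(p.1 = r ∨ p.2 = r)),
      Finset.filter_filter, Finset.filter_filter]
    simp only [not_not]
  have hR_w : (Finset.univ.filter fun p : Fin n × Fin n =>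
      (p.1 < p.2 ∧ w p.2 < w p.1) ∧ (p.1 = r ∨ p.2 = r)) =
      {r} ×ˢ Finset.Ioi r := by
    ext p
    simp only [Finset.mem_filter, Finset.mem_univ, true_and,
      Finset.mem_product, Finset.mem_singleton, Finset.mem_Ioi]
    constructor
    · rintro ⟨⟨h1, h2⟩, h3 | h3⟩
      · exact ⟨h3, h3 ▸ h1⟩
      · exfalso
        rw [h3, hwr] at h2
        have h4 : (top : ℕ) < (w p.1 : ℕ) := h2
        have h5 : (w p.1 : ℕ) < n := (w p.1).isLt
        simp only [htop] at h4
        omega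
    · rintro ⟨h1, h2⟩
      refine ⟨⟨h1 ▸ h2, ?_⟩, Or.inl h1⟩
      rw [h1, hwr]
      have hp2 : p.2 ≠ r := (ne_of_lt h2).symm
      have h3 : (w p.2 : ℕ) ≠ n - 1 := by
        intro h
        exact hne_top p.2 hp2 (Fin.ext h)
      have h4 : (w p.2 : ℕ) < n := (w p.2).isLt
      rw [Fin.lt_def]
      simp only [htop]
      omega
  have hR_ow : (Finset.univ.filter fun p : Fin n × Fin n =>
      (p.1 < p.2 ∧ (o * w) p.2 < (o * w) p.1) ∧ (p.1 = r ∨ p.2 = r)) =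
      Finset.Iio r ×ˢ {r} := by
    ext p
    simp only [Finset.mem_filter, Finset.mem_univ, true_and,
      Finset.mem_product, Finset.mem_singleton, Finset.mem_Iio]
    constructor
    · rintro ⟨⟨h1, h2⟩, h3 | h3⟩
      · exfalso
        have e1 : ((o * w) p.1 : ℕ) = 0 := by
          simp only [Equiv.Perm.mul_apply, h3, hwr, hotop]
        have h2' : ((o * w) p.2 : ℕ) < ((o * w) p.1 : ℕ) := h2
        omega
      · exact ⟨h3 ▸ h1, h3⟩
    · rintro ⟨h1, h2⟩
      refine ⟨⟨h2 ▸ h1, ?_⟩, Or.inr h2⟩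
      have e2 : ((o * w) p.2 : ℕ) = 0 := by
        simp only [Equiv.Perm.mul_apply, h2, hwr, hotop]
      have hp1 : p.1 ≠ r := ne_of_lt h1
      have e1 : ((o * w) p.1 : ℕ) = (w p.1 : ℕ) + 1 := by
        simp only [Equiv.Perm.mul_apply]
        exact hvo _ (hne_top _ hp1)
      rw [Fin.lt_def]
      omega
  have hD : (Finset.univ.filter fun p : Fin n × Fin n =>
      (p.1 < p.2 ∧ (o * w) p.2 < (o * w) p.1) ∧ ¬(p.1 = r ∨ p.2 = r)) =
      (Finset.univ.filter fun p : Fin n × Fin n =>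
      (p.1 < p.2 ∧ w p.2 < w p.1) ∧ ¬(p.1 = r ∨ p.2 = r)) := by
    ext p
    simp only [Finset.mem_filter, Finset.mem_univ, true_and]
    have key : ¬(p.1 = r ∨ p.2 = r) →
        ((o * w) p.2 < (o * w) p.1 ↔ w p.2 < w p.1) := by
      intro h3
      push_neg at h3
      have e1 : ((o * w) p.1 : ℕ) = (w p.1 : ℕ) + 1 := by
        simp only [Equiv.Perm.mul_apply]
        exact hvo _ (hne_top _ h3.1)
      have e2 : ((o * w) p.2 : ℕ) = (w p.2 : ℕ) + 1 := by
        simp only [Equiv.Perm.mul_apply]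
        exact hvo _ (hne_top _ h3.2)
      rw [Fin.lt_def, Fin.lt_def, e1, e2]
      omega
    tauto
  have e1 := hsplit (o * w)
  have e2 := hsplit w
  rw [hR_ow, hD] at e1
  rw [hR_w] at e2
  simp only [Finset.card_product, Finset.card_singleton, Fin.card_Ioi,
    Fin.card_Iio, mul_one, one_mul] at e1 e2
  have hrn : (r : ℕ) < n := r.isLt
  omega

lemma lift_single_q {n : ℕ} (f : Equiv.Perm (Fin n) → QMod n)
    (a : Equiv.Perm (Fin n)) (c : QRing n) :
    (Finsupp.lift (QMod n) (QRing n) (Equiv.Perm (Fin n)) f)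
      (Finsupp.single a c) = c • f a := by
  rw [Finsupp.lift_apply]
  exact Finsupp.sum_single_index (zero_smul _ _)

lemma qProd_mul {n a b c : ℕ} (h1 : a ≤ b) (h2 : b ≤ c) :
    qProd n a b * qProd n b c = qProd n a c :=
  Finset.prod_Ico_consecutive _ h1 h2

end TOpOopAux

open TOpOopAux in
/-- The operators `T_{ij}` and `O` commute, where `o` is the cyclic shift
`o(i) = i + 1 (mod n)`. -/
theorem TOp_comm_Oop (n : ℕ) (hn : 0 < n) (o : Equiv.Perm (Fin n))
    (ho : ∀ a : Fin n, (o a : ℕ) = ((a : ℕ) + 1) % n)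
    (i j : Fin n) (hij : i < j) :
    (TOp n i j).comp (Oop n hn o) = (Oop n hn o).comp (TOp n i j) := by
  apply Finsupp.lhom_ext
  intro w c
  set s : Equiv.Perm (Fin n) := Equiv.swap i j with hs
  set top : Fin n := ⟨n - 1, Nat.sub_lt hn Nat.one_pos⟩ with htop
  -- basic evaluation lemmas
  have hTs : ∀ (u : Equiv.Perm (Fin n)) (d : QRing n),
      TOp n i j (Finsupp.single u d) =
        if (invLen (u * s) : ℤ) = (invLen u : ℤ) + 1 then
          Finsupp.single (u * s) d
        else if (invLen (u * s) : ℤ)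
            = (invLen u : ℤ) - 2 * ((j : ℤ) - (i : ℤ)) + 1 then
          Finsupp.single (u * s) (d * qProd n (i : ℕ) (j : ℕ))
        else 0 := by
    intro u d
    rw [hs]
    unfold TOp
    rw [lift_single_q]
    split_ifs with h1 h2 <;>
      simp [Finsupp.smul_single']
  have hOs : ∀ (u : Equiv.Perm (Fin n)) (d : QRing n),
      Oop n hn o (Finsupp.single u d) =
        Finsupp.single (o * u)
          (d * qProd n ((u⁻¹ top : Fin n) : ℕ) (n - 1)) := by
    intro u d
    rw [htop]
    unfold Oop
    rw [lift_single_q]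
    simp [Finsupp.smul_single']
  -- integer facts
  have hvij : (i : ℕ) < (j : ℕ) := hij
  have hvjn : (j : ℕ) < n := j.isLt
  have A1 := invLen_mul_swap hij w
  have A2 := invLen_mul_swap hij (o * w)
  have B1 := invLen_o_mul hn o ho w
  have B2 := invLen_o_mul hn o ho (w * s)
  rw [← htop] at B1 B2
  rw [← hs] at A1 A2
  have hCwB := Cset_le_B (w := w) hij
  have hCowB := Cset_le_B (w := o * w) hij
  have hr' : (w * s)⁻¹ top = s (w⁻¹ top) := by
    have hinv : s⁻¹ = s := by rw [hs]; exact Equiv.swap_inv i j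
    rw [mul_inv_rev, hinv, Equiv.Perm.mul_apply]
  have hassoc : o * w * s = o * (w * s) := mul_assoc o w s
  rw [hassoc] at A2
  -- value of w at the swap points
  have hwtop : w (w⁻¹ top) = top := Equiv.apply_symm_apply w top
  have hvo : ∀ a : Fin n, a ≠ top → (o a : ℕ) = (a : ℕ) + 1 := by
    intro a ha
    have h0 : (a : ℕ) < n := a.isLt
    have h1 : (a : ℕ) ≠ n - 1 := fun h => ha (Fin.ext h)
    rw [ho a, Nat.mod_eq_of_lt]
    omega
  have hotop : (o top : ℕ) = 0 := by
    rw [ho top]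
    have h1 : (top : ℕ) + 1 = n := by simp only [htop]; omega
    rw [h1, Nat.mod_self]
  have hne_top : ∀ a : Fin n, a ≠ w⁻¹ top → w a ≠ top := by
    intro a ha h
    exact ha (w.injective (h.trans hwtop.symm))
  simp only [LinearMap.comp_apply]
  rw [hOs w c, hTs w c, hTs (o * w) _]
  rw [hassoc]
  -- case split on r = w⁻¹ top
  rcases eq_or_ne (w⁻¹ top) i with hri | hri
  · -- r = i : w i = top
    have hwi : w i = top := by rw [← hri, hwtop]
    have hwj_ne : w j ≠ top := hne_top j (by rw [hri]; exact hij.ne')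
    have hwji : w j < w i := by
      rw [Fin.lt_def, hwi]
      have h4 : (w j : ℕ) < n := (w j).isLt
      have h5 : (w j : ℕ) ≠ n - 1 := fun h => hwj_ne (by rw [htop]; exact Fin.ext h)
      simp only [htop]
      omega
    have hCl := Cset_lower hij hwji
    have howij : (o * w) i < (o * w) j := by
      rw [Fin.lt_def]
      have e1 : ((o * w) i : ℕ) = 0 := by
        simp only [Equiv.Perm.mul_apply, hwi, hotop]
      have e2 : ((o * w) j : ℕ) = (w j : ℕ) + 1 := by
        simp only [Equiv.Perm.mul_apply]
        exact hvo _ hwj_ne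
      omega
    have hCu := Cset_upper hij howij
    have hri' : ((w * s)⁻¹ top : ℕ) = (j : ℕ) := by
      rw [hr', hri, hs, Equiv.swap_apply_left]
    have hriv : ((w⁻¹ top : Fin n) : ℕ) = (i : ℕ) := by rw [hri]
    rw [hriv] at B1
    rw [hri'] at B2
    by_cases hc2 : (invLen (w * s) : ℤ)
        = (invLen w : ℤ) - 2 * ((j : ℤ) - (i : ℤ)) + 1
    · have hc1 : ¬ ((invLen (w * s) : ℤ) = (invLen w : ℤ) + 1) := by omega
      rw [if_neg hc1, if_pos hc2, hOs, hri']
      rw [if_pos (show (invLen (o * (w * s)) : ℤ) = (invLen (o * w) : ℤ) + 1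
        by omega)]
      rw [hriv]
      congr 1
      have hq : qProd n (i : ℕ) (j : ℕ) * qProd n (j : ℕ) (n - 1)
          = qProd n (i : ℕ) (n - 1) := qProd_mul hvij.le (by omega)
      rw [← hq]
      ring
    · have hc1 : ¬ ((invLen (w * s) : ℤ) = (invLen w : ℤ) + 1) := by omega
      rw [if_neg hc1, if_neg hc2, map_zero]
      rw [if_neg (show ¬ ((invLen (o * (w * s)) : ℤ) = (invLen (o * w) : ℤ) + 1)
        by omega)]
      rw [if_neg (show ¬ ((invLen (o * (w * s)) : ℤ)
        = (invLen (o * w) : ℤ) - 2 * ((j : ℤ) - (i : ℤ)) + 1) by omega)]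
  rcases eq_or_ne (w⁻¹ top) j with hrj | hrj
  · -- r = j : w j = top
    have hwj : w j = top := by rw [← hrj, hwtop]
    have hwi_ne : w i ≠ top := hne_top i (by rw [hrj]; exact hij.ne)
    have hwij : w i < w j := by
      rw [Fin.lt_def, hwj]
      have h4 : (w i : ℕ) < n := (w i).isLt
      have h5 : (w i : ℕ) ≠ n - 1 := fun h => hwi_ne (by rw [htop]; exact Fin.ext h)
      simp only [htop]
      omega
    have hCu := Cset_upper hij hwij
    have howji : (o * w) j < (o * w) i := by
      rw [Fin.lt_def]
      have e1 : ((o * w) j : ℕ) = 0 := by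
        simp only [Equiv.Perm.mul_apply, hwj, hotop]
      have e2 : ((o * w) i : ℕ) = (w i : ℕ) + 1 := by
        simp only [Equiv.Perm.mul_apply]
        exact hvo _ hwi_ne
      omega
    have hCl := Cset_lower hij howji
    have hri' : ((w * s)⁻¹ top : ℕ) = (i : ℕ) := by
      rw [hr', hrj, hs, Equiv.swap_apply_right]
    have hrjv : ((w⁻¹ top : Fin n) : ℕ) = (j : ℕ) := by rw [hrj]
    rw [hrjv] at B1
    rw [hri'] at B2
    by_cases hc1 : (invLen (w * s) : ℤ) = (invLen w : ℤ) + 1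
    · rw [if_pos hc1, hOs, hri']
      rw [if_neg (show ¬ ((invLen (o * (w * s)) : ℤ) = (invLen (o * w) : ℤ) + 1)
        by omega)]
      rw [if_pos (show (invLen (o * (w * s)) : ℤ)
        = (invLen (o * w) : ℤ) - 2 * ((j : ℤ) - (i : ℤ)) + 1 by omega)]
      rw [hrjv]
      congr 1
      have hq : qProd n (i : ℕ) (j : ℕ) * qProd n (j : ℕ) (n - 1)
          = qProd n (i : ℕ) (n - 1) := qProd_mul hvij.le (by omega)
      rw [← hq]
      ring
    · have hc2 : ¬ ((invLen (w * s) : ℤ)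
          = (invLen w : ℤ) - 2 * ((j : ℤ) - (i : ℤ)) + 1) := by omega
      rw [if_neg hc1, if_neg hc2, map_zero]
      rw [if_neg (show ¬ ((invLen (o * (w * s)) : ℤ) = (invLen (o * w) : ℤ) + 1)
        by omega)]
      rw [if_neg (show ¬ ((invLen (o * (w * s)) : ℤ)
        = (invLen (o * w) : ℤ) - 2 * ((j : ℤ) - (i : ℤ)) + 1) by omega)]
  · -- r ∉ {i, j}
    have hsr : s (w⁻¹ top) = w⁻¹ top := by
      rw [hs]; exact Equiv.swap_apply_of_ne_of_ne hri hrj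
    have hri' : ((w * s)⁻¹ top : ℕ) = ((w⁻¹ top : Fin n) : ℕ) := by
      rw [hr', hsr]
    rw [hri'] at B2
    by_cases hc1 : (invLen (w * s) : ℤ) = (invLen w : ℤ) + 1
    · rw [if_pos hc1, hOs, hri']
      rw [if_pos (show (invLen (o * (w * s)) : ℤ) = (invLen (o * w) : ℤ) + 1
        by omega)]
    by_cases hc2 : (invLen (w * s) : ℤ)
        = (invLen w : ℤ) - 2 * ((j : ℤ) - (i : ℤ)) + 1
    · rw [if_neg hc1, if_pos hc2, hOs, hri']
      rw [if_neg (show ¬ ((invLen (o * (w * s)) : ℤ) = (invLen (o * w) : ℤ) + 1)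
        by omega)]
      rw [if_pos (show (invLen (o * (w * s)) : ℤ)
        = (invLen (o * w) : ℤ) - 2 * ((j : ℤ) - (i : ℤ)) + 1 by omega)]
      congr 1
      ring
    · rw [if_neg hc1, if_neg hc2, map_zero]
      rw [if_neg (show ¬ ((invLen (o * (w * s)) : ℤ) = (invLen (o * w) : ℤ) + 1)
        by omega)]
      rw [if_neg (show ¬ ((invLen (o * (w * s)) : ℤ)
        = (invLen (o * w) : ℤ) - 2 * ((j : ℤ) - (i : ℤ)) + 1) by omega)]

end
end

section
/- Let n be a positive integer and let o ∈ S_n be the n-cycle with o(i) = i+1 for 1 ≤ i ≤ n−1 and o(n) = 1. Define the transition relation on S_n by: u → w if and only if there exist 1 ≤ a < b ≤ n with w = u·s_{ab} and either ℓ(w) = ℓ(u) + 1 or ℓ(w) = ℓ(u) − 2(b−a) + 1. Then this relation is invariant under the cyclic shift: for all u, w ∈ S_n, u → w if and only if (o∘u) → (o∘w). -/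
/-- The transition relation on `S_n`: `u → w` iff `w = u·s_{ab}` for some
`1 ≤ a < b ≤ n` with `ℓ(w) = ℓ(u) + 1` or `ℓ(w) = ℓ(u) − 2(b−a) + 1`. -/
def TransitionRel {n : ℕ} (u w : Equiv.Perm (Fin n)) : Prop :=
  ∃ a b : Fin n, a < b ∧ w = u * Equiv.swap a b ∧
    ((invLen w : ℤ) = (invLen u : ℤ) + 1 ∨
      (invLen w : ℤ) = (invLen u : ℤ) - 2 * ((b : ℤ) - (a : ℤ)) + 1)

/-- If `u a` is the maximal value of `u`, then multiplying on the right by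
`swap a b` (with `a < b`) does not increase the number of inversions. -/
lemma invLen_mul_swap_le {n : ℕ} (u : Equiv.Perm (Fin n)) (a b : Fin n)
    (hab : a < b) (hmax : ∀ z, u z ≤ u a) :
    invLen (u * Equiv.swap a b) ≤ invLen u := by
  classical
  have hwapp : ∀ z, (u * Equiv.swap a b) z = u (Equiv.swap a b z) := fun z => rfl
  have hsnd : ∀ p : Fin n × Fin n,
      p.1 < p.2 → (u * Equiv.swap a b) p.2 < (u * Equiv.swap a b) p.1 → p.2 ≠ b := by
    intro p _ h2 hpb
    rw [hpb, hwapp, hwapp, Equiv.swap_apply_right] at h2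
    exact absurd (hmax _) (not_le.mpr h2)
  unfold invLen
  apply Finset.card_le_card_of_injOn
    (fun p => if p.1 = a ∧ b < p.2 then (b, p.2) else if p.1 = b then (a, p.2)
      else if p.2 = a then (p.1, b) else p)
  · intro p hp
    simp only [Finset.mem_coe, Finset.mem_filter, Finset.mem_univ, true_and] at hp ⊢
    obtain ⟨h1, h2⟩ := hp
    have hpb := hsnd p h1 h2
    rw [hwapp, hwapp] at h2
    split_ifs with c1 c2 c3
    · obtain ⟨c1a, c1b⟩ := c1
      refine ⟨c1b, ?_⟩
      rw [c1a, Equiv.swap_apply_left] at h2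
      rwa [Equiv.swap_apply_of_ne_of_ne (ne_of_gt (lt_trans hab c1b)) (ne_of_gt c1b)] at h2
    · have h2b : a < p.2 := lt_trans hab (c2 ▸ h1)
      refine ⟨h2b, ?_⟩
      exact lt_of_le_of_ne (hmax _) (fun he => (ne_of_gt h2b) (u.injective he))
    · have h1a : p.1 < a := c3 ▸ h1
      refine ⟨lt_trans h1a hab, ?_⟩
      rw [c3, Equiv.swap_apply_left,
        Equiv.swap_apply_of_ne_of_ne (ne_of_lt h1a) (ne_of_lt (lt_trans h1a hab))] at h2
      exact h2
    · refine ⟨h1, ?_⟩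
      by_cases hpa : p.1 = a
      · rw [hpa]
        have hp2 : p.2 ≠ a := ne_of_gt (hpa ▸ h1)
        exact lt_of_le_of_ne (hmax _) (fun he => hp2 (u.injective he))
      · rwa [Equiv.swap_apply_of_ne_of_ne c3 hpb,
          Equiv.swap_apply_of_ne_of_ne hpa c2] at h2
  · intro p hp q hq h
    simp only [Finset.coe_filter, Set.mem_setOf_eq, Finset.mem_univ, true_and] at hp hq
    have hpb : (p.2 : ℕ) ≠ b := fun he => hsnd p hp.1 hp.2 (Fin.ext he)
    have hqb : (q.2 : ℕ) ≠ b := fun he => hsnd q hq.1 hq.2 (Fin.ext he)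
    have hp1 : (p.1 : ℕ) < p.2 := hp.1
    have hq1 : (q.1 : ℕ) < q.2 := hq.1
    have hab' : (a : ℕ) < b := hab
    clear hp hq hsnd hwapp hmax
    beta_reduce at h
    split_ifs at h <;>
      (simp only [Prod.ext_iff, Fin.ext_iff, Fin.lt_def, not_and, not_lt] at *; omega)

/-- Reversing all values turns inversions into non-inversions. -/
lemma invLen_rev_add {n : ℕ} (v : Equiv.Perm (Fin n)) :
    invLen (Fin.revPerm * v) + invLen v
      = (Finset.univ.filter fun p : Fin n × Fin n => p.1 < p.2).card := by
  classical
  unfold invLen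
  have : ∀ p : Fin n × Fin n,
      (p.1 < p.2 ∧ (Fin.revPerm * v : Equiv.Perm (Fin n)) p.2
          < (Fin.revPerm * v : Equiv.Perm (Fin n)) p.1)
        ↔ (p.1 < p.2 ∧ ¬ (v p.2 < v p.1)) := by
    intro p
    constructor
    · rintro ⟨h1, h2⟩
      refine ⟨h1, ?_⟩
      have : v p.1 < v p.2 := by
        simpa [Equiv.Perm.mul_apply, Fin.rev_lt_rev] using h2
      exact not_lt.mpr (le_of_lt this)
    · rintro ⟨h1, h2⟩
      refine ⟨h1, ?_⟩
      have hne : v p.1 ≠ v p.2 := fun he => (ne_of_lt h1) (v.injective he)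
      have : v p.1 < v p.2 := lt_of_le_of_ne (not_lt.mp h2) hne
      simpa [Equiv.Perm.mul_apply, Fin.rev_lt_rev] using this
  rw [Finset.filter_congr (fun p _ => this p)]
  have := Finset.card_filter_add_card_filter_not
    (s := Finset.univ.filter fun p : Fin n × Fin n => p.1 < p.2)
    (p := fun p : Fin n × Fin n => v p.2 < v p.1)
  rw [Finset.filter_filter, Finset.filter_filter] at this
  omega

/-- If `u a` is the minimal value of `u`, then multiplying on the right by
`swap a b` (with `a < b`) does not decrease the number of inversions. -/
lemma le_invLen_mul_swap {n : ℕ} (u : Equiv.Perm (Fin n)) (a b : Fin n)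
    (hab : a < b) (hmin : ∀ z, u a ≤ u z) :
    invLen u ≤ invLen (u * Equiv.swap a b) := by
  have hmax : ∀ z, (Fin.revPerm * u : Equiv.Perm (Fin n)) z
      ≤ (Fin.revPerm * u : Equiv.Perm (Fin n)) a := by
    intro z
    simp only [Equiv.Perm.mul_apply, Fin.revPerm_apply]
    exact Fin.rev_le_rev.mpr (hmin z)
  have h := invLen_mul_swap_le (Fin.revPerm * u) a b hab hmax
  rw [mul_assoc] at h
  have e1 := invLen_rev_add (u * Equiv.swap a b)
  have e2 := invLen_rev_add u
  omega

/-- Key formula: composing with the cycle `o` on the left changes the number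
of inversions by `2·m − (n−1)`, where `m` is the position of the value `n−1`. -/
lemma invLen_cycle_mul {n : ℕ} (hn : 0 < n) (o : Equiv.Perm (Fin n))
    (ho : ∀ a : Fin n, (o a : ℕ) = ((a : ℕ) + 1) % n)
    (u : Equiv.Perm (Fin n)) (m : Fin n) (hm : ((u m : Fin n) : ℕ) = n - 1) :
    (invLen (o * u) : ℤ) = (invLen u : ℤ) + 2 * ((m : ℕ) : ℤ) - ((n : ℤ) - 1) := by
  classical
  have hvm : ((o (u m)) : ℕ) = 0 := by
    rw [ho, hm]
    have : n - 1 + 1 = n := by omega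
    rw [this, Nat.mod_self]
  have hvz : ∀ z, z ≠ m → ((o (u z)) : ℕ) = ((u z : Fin n) : ℕ) + 1 := by
    intro z hz
    have h1 : u z ≠ u m := fun he => hz (u.injective he)
    have h2 : ((u z : Fin n) : ℕ) ≠ n - 1 := by
      rw [← hm]; exact fun he => h1 (Fin.ext he)
    have h3 : ((u z : Fin n) : ℕ) < n := (u z).isLt
    rw [ho]
    exact Nat.mod_eq_of_lt (by omega)
  set X : Finset (Fin n × Fin n) := Finset.univ.filter
    (fun p => p.1 < p.2 ∧ p.1 ≠ m ∧ p.2 ≠ m ∧ u p.2 < u p.1) with hX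
  have houapp : ∀ z, (o * u) z = o (u z) := fun z => rfl
  have key1 : invLen (o * u) = (m : ℕ) + X.card := by
    unfold invLen
    have hsplit := Finset.card_filter_add_card_filter_not
      (s := Finset.univ.filter fun p : Fin n × Fin n =>
        p.1 < p.2 ∧ (o * u) p.2 < (o * u) p.1)
      (p := fun p : Fin n × Fin n => p.2 = m)
    rw [Finset.filter_filter, Finset.filter_filter] at hsplit
    have e1 : (Finset.univ.filter fun p : Fin n × Fin n =>
        (p.1 < p.2 ∧ (o * u) p.2 < (o * u) p.1) ∧ p.2 = m)
        = Finset.Iio m ×ˢ {m} := by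
      ext p
      simp only [Finset.mem_filter, Finset.mem_univ, true_and, Finset.mem_product,
        Finset.mem_Iio, Finset.mem_singleton]
      constructor
      · rintro ⟨⟨h1, -⟩, h2⟩; exact ⟨h2 ▸ h1, h2⟩
      · rintro ⟨h1, h2⟩
        refine ⟨⟨h2 ▸ h1, ?_⟩, h2⟩
        have hp1 : p.1 ≠ m := ne_of_lt h1
        rw [Fin.lt_def, houapp, houapp, h2, hvm, hvz p.1 hp1]
        omega
    have e2 : (Finset.univ.filter fun p : Fin n × Fin n =>
        (p.1 < p.2 ∧ (o * u) p.2 < (o * u) p.1) ∧ ¬ p.2 = m) = X := by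
      ext p
      simp only [hX, Finset.mem_filter, Finset.mem_univ, true_and]
      constructor
      · rintro ⟨⟨h1, h2⟩, h3⟩
        have hp1 : p.1 ≠ m := by
          intro he
          rw [Fin.lt_def, houapp, houapp, he, hvm, hvz p.2 h3] at h2
          omega
        refine ⟨h1, hp1, h3, ?_⟩
        rw [Fin.lt_def, houapp, houapp, hvz p.2 h3, hvz p.1 hp1] at h2
        exact Fin.lt_def.mpr (by omega)
      · rintro ⟨h1, h2, h3, h4⟩
        refine ⟨⟨h1, ?_⟩, h3⟩
        rw [Fin.lt_def, houapp, houapp, hvz p.2 h3, hvz p.1 h2]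
        have := Fin.lt_def.mp h4
        omega
    rw [e1, e2] at hsplit
    rw [Finset.card_product, Fin.card_Iio, Finset.card_singleton, mul_one] at hsplit
    omega
  have key2 : invLen u = (n - 1 - (m : ℕ)) + X.card := by
    unfold invLen
    have hsplit := Finset.card_filter_add_card_filter_not
      (s := Finset.univ.filter fun p : Fin n × Fin n => p.1 < p.2 ∧ u p.2 < u p.1)
      (p := fun p : Fin n × Fin n => p.1 = m)
    rw [Finset.filter_filter, Finset.filter_filter] at hsplit
    have e1 : (Finset.univ.filter fun p : Fin n × Fin n =>
        (p.1 < p.2 ∧ u p.2 < u p.1) ∧ p.1 = m) = {m} ×ˢ Finset.Ioi m := by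
      ext p
      simp only [Finset.mem_filter, Finset.mem_univ, true_and, Finset.mem_product,
        Finset.mem_Ioi, Finset.mem_singleton]
      constructor
      · rintro ⟨⟨h1, -⟩, h2⟩; exact ⟨h2, h2 ▸ h1⟩
      · rintro ⟨h1, h2⟩
        refine ⟨⟨h1 ▸ h2, ?_⟩, h1⟩
        have hp2 : p.2 ≠ m := ne_of_gt h2
        have hne : ((u p.2 : Fin n) : ℕ) ≠ n - 1 := by
          rw [← hm]; exact fun he => hp2 (u.injective (Fin.ext he))
        have := (u p.2).isLt
        rw [Fin.lt_def, h1, hm]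
        omega
    have e2 : (Finset.univ.filter fun p : Fin n × Fin n =>
        (p.1 < p.2 ∧ u p.2 < u p.1) ∧ ¬ p.1 = m) = X := by
      ext p
      simp only [hX, Finset.mem_filter, Finset.mem_univ, true_and]
      constructor
      · rintro ⟨⟨h1, h2⟩, h3⟩
        refine ⟨h1, h3, ?_, h2⟩
        intro he
        rw [Fin.lt_def, he, hm] at h2
        have := (u p.1).isLt
        omega
      · rintro ⟨h1, h2, h3, h4⟩
        exact ⟨⟨h1, h4⟩, h2⟩
    rw [e1, e2] at hsplit
    rw [Finset.card_product, Fin.card_Ioi, Finset.card_singleton, one_mul] at hsplit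
    omega
  have hmlt : (m : ℕ) < n := m.isLt
  omega

/-- The length condition of the transition relation is invariant under
composing with the cycle on the left. -/
lemma key_cond {n : ℕ} (hn : 0 < n) (o : Equiv.Perm (Fin n))
    (ho : ∀ a : Fin n, (o a : ℕ) = ((a : ℕ) + 1) % n)
    (u w : Equiv.Perm (Fin n)) (a b : Fin n) (hab : a < b)
    (hw : w = u * Equiv.swap a b) :
    ((invLen w : ℤ) = (invLen u : ℤ) + 1 ∨
      (invLen w : ℤ) = (invLen u : ℤ) - 2 * ((b : ℤ) - (a : ℤ)) + 1)
    ↔ ((invLen (o * w) : ℤ) = (invLen (o * u) : ℤ) + 1 ∨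
      (invLen (o * w) : ℤ) = (invLen (o * u) : ℤ) - 2 * ((b : ℤ) - (a : ℤ)) + 1) := by
  classical
  have hab' : (a : ℕ) < b := hab
  have hbz : ((b : ℤ)) = ((b : ℕ) : ℤ) := rfl
  have haz : ((a : ℤ)) = ((a : ℕ) : ℤ) := rfl
  set m : Fin n := u⁻¹ ⟨n - 1, by omega⟩ with hmdef
  have hm : ((u m : Fin n) : ℕ) = n - 1 := by
    rw [hmdef]; exact congrArg Fin.val (u.apply_symm_apply _)
  have hmval : ((w (Equiv.swap a b m) : Fin n) : ℕ) = n - 1 := by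
    rw [hw]
    show ((u (Equiv.swap a b (Equiv.swap a b m)) : Fin n) : ℕ) = n - 1
    rw [Equiv.swap_apply_self]
    exact hm
  have L1u := invLen_cycle_mul hn o ho u m hm
  have L1w := invLen_cycle_mul hn o ho w (Equiv.swap a b m) hmval
  have how : o * w = (o * u) * Equiv.swap a b := by rw [hw, mul_assoc]
  have htople : ∀ z : Fin n, (z : ℕ) ≤ n - 1 := fun z => by have := z.isLt; omega
  by_cases hma : m = a
  · -- u a is the maximal value
    have hsw : Equiv.swap a b m = b := by rw [hma, Equiv.swap_apply_left]
    have hmax : ∀ z, u z ≤ u a := by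
      intro z
      rw [Fin.le_def, ← hma, hm]
      exact htople _
    have h2 : invLen w ≤ invLen u := by
      rw [hw]; exact invLen_mul_swap_le u a b hab hmax
    have hmin : ∀ z, (o * u) a ≤ (o * u) z := by
      intro z
      rw [Fin.le_def]
      have : (((o * u) a : Fin n) : ℕ) = 0 := by
        show ((o (u a) : Fin n) : ℕ) = 0
        rw [ho, ← hma, hm]
        have : n - 1 + 1 = n := by omega
        rw [this, Nat.mod_self]
      omega
    have h3 : invLen (o * u) ≤ invLen (o * w) := by
      rw [how]; exact le_invLen_mul_swap (o * u) a b hab hmin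
    rw [hsw] at L1w
    rw [← hma] at *
    omega
  · by_cases hmb : m = b
    · -- u b is the maximal value, so w a is maximal for w
      have hsw : Equiv.swap a b m = a := by rw [hmb, Equiv.swap_apply_right]
      have hu : u = w * Equiv.swap a b := by
        rw [hw, mul_assoc, Equiv.swap_mul_self, mul_one]
      have hwa : ((w a : Fin n) : ℕ) = n - 1 := by rw [← hsw]; exact hmval
      have hwmax : ∀ z, w z ≤ w a := by
        intro z
        rw [Fin.le_def, hwa]
        exact htople _
      have h2 : invLen u ≤ invLen w := by
        rw [hu]; exact invLen_mul_swap_le w a b hab hwmax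
      have hmin : ∀ z, (o * w) a ≤ (o * w) z := by
        intro z
        rw [Fin.le_def]
        have : (((o * w) a : Fin n) : ℕ) = 0 := by
          show ((o (w a) : Fin n) : ℕ) = 0
          rw [ho, hwa]
          have : n - 1 + 1 = n := by omega
          rw [this, Nat.mod_self]
        omega
      have h3 : invLen (o * w) ≤ invLen (o * u) := by
        have hou : o * u = (o * w) * Equiv.swap a b := by rw [hu, mul_assoc]
        rw [hou]; exact le_invLen_mul_swap (o * w) a b hab hmin
      rw [hsw] at L1w
      rw [← hmb] at hab' ⊢
      omega
    · -- m is fixed by the swap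
      have hsw : Equiv.swap a b m = m := Equiv.swap_apply_of_ne_of_ne hma hmb
      rw [hsw] at L1w
      omega

/-- The transition graph `Tr_n` is invariant under the cyclic shift
`w ↦ o∘w`, where `o` is the `n`-cycle `o(i) = i + 1 (mod n)`. -/
theorem transitionRel_invariant_under_cycle
    (n : ℕ) (hn : 0 < n) (o : Equiv.Perm (Fin n))
    (ho : ∀ a : Fin n, (o a : ℕ) = ((a : ℕ) + 1) % n)
    (u w : Equiv.Perm (Fin n)) :
    TransitionRel u w ↔ TransitionRel (o * u) (o * w) := by
  constructor
  · rintro ⟨a, b, hab, hw, hc⟩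
    exact ⟨a, b, hab, by rw [hw, mul_assoc],
      (key_cond hn o ho u w a b hab hw).mp hc⟩
  · rintro ⟨a, b, hab, hw, hc⟩
    have hw' : w = u * Equiv.swap a b := by
      have := hw
      rw [mul_assoc] at this
      exact mul_left_cancel this
    exact ⟨a, b, hab, hw',
      (key_cond hn o ho u w a b hab hw').mpr hc⟩
end
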